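/- arXiv:1605.07529 — 6 statements merged into one kernel-verified Lean document; each statement's English description precedes it below -/
import Mathlib

section
/- For every a ∈ A, the set {b ∈ B : b > a and |B ∩ [a,b]| = |A ∩ [a,b]|} is nonempty and has a minimum; hence the stable allocation map τ : A → B, τ(a) = min{b ∈ B : b > a, |B ∩ [a,b]| = |A ∩ [a,b]|}, is well-defined. -/
open Set Filter

/-- Discrete intermediate value theorem: an integer sequence that starts `≤ 0`,
reaches `≥ 0`, and increases by at most 1 per step, hits `0`. -/
private lemma int_ivt (g : ℕ → ℤ) (j0 j1 : ℕ) (hle : j0 ≤ j1) (h0 : g j0 ≤ 0)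
    (h1 : 0 ≤ g j1) (step : ∀ j, j0 ≤ j → g (j + 1) ≤ g j + 1) :
    ∃ j, j0 ≤ j ∧ g j = 0 := by
  classical
  have hex : ∃ j, j0 ≤ j ∧ 0 ≤ g j := ⟨j1, hle, h1⟩
  obtain ⟨hj1, hj2⟩ := Nat.find_spec hex
  rcases eq_or_lt_of_le hj1 with h | h
  · exact ⟨j0, le_refl _, le_antisymm h0 (h ▸ hj2)⟩
  · obtain ⟨k, hk⟩ : ∃ k, Nat.find hex = k + 1 := ⟨Nat.find hex - 1, by omega⟩
    have hk0 : j0 ≤ k := by omega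
    have hmin := Nat.find_min hex (show k < Nat.find hex by omega)
    push_neg at hmin
    have hgk : g k < 0 := hmin hk0
    have hstep := step k hk0
    refine ⟨k + 1, by omega, ?_⟩
    rw [hk] at hj2
    omega

/-- For every `a ∈ A`, the set
`{b ∈ B : b > a and |B ∩ [a,b]| = |A ∩ [a,b]|}` is nonempty and has a minimum,
so the stable allocation map `τ : A → B` is well-defined. -/
theorem stable_allocation_well_defined
    (a b : ℕ → ℝ)
    (ha : StrictAntiOn a (Set.Ici 1)) (hb : StrictMonoOn b (Set.Ici 1))
    (ha' : Tendsto a atTop atBot) (hb' : Tendsto b atTop atTop)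
    (hdisj : Disjoint (a '' Set.Ici 1) (b '' Set.Ici 1)) :
    ∀ x ∈ a '' Set.Ici 1,
      ∃ m : ℝ, IsLeast {y | y ∈ b '' Set.Ici 1 ∧ x < y ∧
        ((b '' Set.Ici 1) ∩ Set.Icc x y).ncard
          = ((a '' Set.Ici 1) ∩ Set.Icc x y).ncard} m := by
  classical
  rintro x ⟨i0, hi0, rfl⟩
  set x := a i0 with hxdef
  set A := a '' Set.Ici 1 with hAdef
  set B := b '' Set.Ici 1 with hBdef
  have hxA : x ∈ A := ⟨i0, hi0, rfl⟩
  have hxB : x ∉ B := fun h => Set.disjoint_left.mp hdisj hxA h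
  -- monotonicity helpers
  have hble : ∀ {k j : ℕ}, 1 ≤ k → k ≤ j → b k ≤ b j := by
    intro k j hk hkj
    rcases eq_or_lt_of_le hkj with rfl | h
    · exact le_rfl
    · exact (hb (Set.mem_Ici.mpr hk) (Set.mem_Ici.mpr (hk.trans hkj)) h).le
  have hbidx : ∀ {k j : ℕ}, 1 ≤ k → 1 ≤ j → b k ≤ b j → k ≤ j := by
    intro k j hk hj hle
    by_contra h
    push_neg at h
    exact absurd (hb (Set.mem_Ici.mpr hj) (Set.mem_Ici.mpr hk) h) (by linarith)
  -- finiteness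
  have finA : (A ∩ Set.Ici x).Finite := by
    obtain ⟨N, hN⟩ := (tendsto_atBot.mp ha' (x - 1)).exists_forall_of_atTop
    apply ((Set.finite_Iio N).image a).subset
    rintro y ⟨⟨n, hn, rfl⟩, hy⟩
    refine ⟨n, ?_, rfl⟩
    by_contra h
    simp only [Set.mem_Iio, not_lt] at h
    have := hN n h
    simp only [Set.mem_Ici] at hy
    linarith
  have finB : ∀ t : ℝ, (B ∩ Set.Iic t).Finite := by
    intro t
    obtain ⟨M, hM⟩ := (tendsto_atTop.mp hb' (t + 1)).exists_forall_of_atTop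
    apply ((Set.finite_Iio M).image b).subset
    rintro y ⟨⟨n, hn, rfl⟩, hy⟩
    refine ⟨n, ?_, rfl⟩
    by_contra h
    simp only [Set.mem_Iio, not_lt] at h
    have := hM n h
    simp only [Set.mem_Iic] at hy
    linarith
  have finAt : ∀ t : ℝ, (A ∩ Set.Icc x t).Finite := fun t =>
    finA.subset fun y ⟨h1, h2⟩ => ⟨h1, h2.1⟩
  have finBt : ∀ t : ℝ, (B ∩ Set.Icc x t).Finite := fun t =>
    (finB t).subset fun y ⟨h1, h2⟩ => ⟨h1, h2.2⟩
  -- least index j0 with b j0 > x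
  have hexP : ∃ j, 1 ≤ j ∧ x < b j := by
    obtain ⟨M, hM⟩ := (tendsto_atTop.mp hb' (x + 1)).exists_forall_of_atTop
    exact ⟨max M 1, le_max_right _ _, by have := hM _ (le_max_left M 1); linarith⟩
  set j0 := Nat.find hexP with hj0def
  obtain ⟨hj01, hj0x⟩ := Nat.find_spec hexP
  have hj0min : ∀ k, 1 ≤ k → x < b k → j0 ≤ k := fun k h1 h2 =>
    Nat.find_min' hexP ⟨h1, h2⟩
  -- counting functions
  set F : ℕ → ℕ := fun j => (B ∩ Set.Icc x (b j)).ncard with hFdef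
  set G : ℕ → ℕ := fun j => (A ∩ Set.Icc x (b j)).ncard with hGdef
  set g : ℕ → ℤ := fun j => (F j : ℤ) - (G j : ℤ) with hgdef
  -- base case: g j0 ≤ 0
  have hBj0 : B ∩ Set.Icc x (b j0) = {b j0} := by
    ext y
    constructor
    · rintro ⟨⟨k, hk, rfl⟩, hy1, hy2⟩
      have hne : b k ≠ x := fun h => hxB (h ▸ ⟨k, hk, rfl⟩)
      have hlt : x < b k := lt_of_le_of_ne hy1 (Ne.symm hne)
      have h1 : j0 ≤ k := hj0min k hk hlt
      have h2 : k ≤ j0 := hbidx hk hj01 hy2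
      simp [le_antisymm h2 h1]
    · rintro rfl
      exact ⟨⟨j0, hj01, rfl⟩, hj0x.le, le_rfl⟩
  have hFj0 : F j0 = 1 := by
    simp only [hFdef, hBj0, Set.ncard_singleton]
  have hGj0 : 1 ≤ G j0 :=
    (Set.ncard_pos (finAt _)).mpr ⟨x, hxA, le_rfl, hj0x.le⟩
  have hgj0 : g j0 ≤ 0 := by simp only [hgdef]; omega
  -- step: for j ≥ j0, F (j+1) = F j + 1 and G j ≤ G (j+1)
  have hstepF : ∀ j, j0 ≤ j → F (j + 1) = F j + 1 := by
    intro j hj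
    have hj1 : 1 ≤ j := hj01.trans hj
    have hkey : B ∩ Set.Icc x (b (j + 1)) = insert (b (j + 1)) (B ∩ Set.Icc x (b j)) := by
      ext y
      constructor
      · rintro ⟨⟨k, hk, rfl⟩, hy1, hy2⟩
        by_cases hkj : k ≤ j
        · exact Or.inr ⟨⟨k, hk, rfl⟩, hy1, (hble hk hkj).trans_eq rfl⟩
        · push_neg at hkj
          have : b (j + 1) ≤ b k := hble (by omega) (by omega)
          exact Or.inl (le_antisymm hy2 this)
      · rintro (rfl | ⟨hyB, hy1, hy2⟩)
        · exact ⟨⟨j + 1, Set.mem_Ici.mpr (by omega), rfl⟩, (hj0x.trans_le (hble hj01 (by omega))).le, le_rfl⟩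
        · exact ⟨hyB, hy1, hy2.trans (hble hj1 (by omega))⟩
    have hnot : b (j + 1) ∉ B ∩ Set.Icc x (b j) := by
      rintro ⟨-, -, hle'⟩
      have : b j < b (j + 1) :=
        hb (Set.mem_Ici.mpr hj1) (Set.mem_Ici.mpr (by omega)) (by omega)
      linarith
    simp only [hFdef, hkey]
    exact Set.ncard_insert_of_notMem hnot (finBt _)
  have hstepG : ∀ j, j0 ≤ j → G j ≤ G (j + 1) := by
    intro j hj
    have hj1 : 1 ≤ j := hj01.trans hj
    apply Set.ncard_le_ncard _ (finAt _)
    exact fun y ⟨h1, h2, h3⟩ => ⟨h1, h2, h3.trans (hble hj1 (by omega))⟩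
  have hstep : ∀ j, j0 ≤ j → g (j + 1) ≤ g j + 1 := by
    intro j hj
    have h1 := hstepF j hj
    have h2 := hstepG j hj
    simp only [hgdef]
    omega
  -- growth: g (j0 + N) ≥ 0 where N = |A ∩ [x,∞)|
  set N := (A ∩ Set.Ici x).ncard with hNdef
  have hGle : ∀ j, G j ≤ N :=
    fun j => Set.ncard_le_ncard (fun y ⟨h1, h2⟩ => ⟨h1, h2.1⟩) finA
  have hFge : N + 1 ≤ F (j0 + N) := by
    have hsub : b '' Set.Icc j0 (j0 + N) ⊆ B ∩ Set.Icc x (b (j0 + N)) := by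
      rintro y ⟨k, ⟨hk1, hk2⟩, rfl⟩
      exact ⟨⟨k, hj01.trans hk1, rfl⟩, (hj0x.trans_le (hble hj01 hk1)).le,
        hble (hj01.trans hk1) hk2⟩
    have hinj : Set.InjOn b (Set.Icc j0 (j0 + N)) :=
      hb.injOn.mono fun k hk => Set.mem_Ici.mpr (hj01.trans hk.1)
    have hcard : (b '' Set.Icc j0 (j0 + N)).ncard = N + 1 := by
      rw [Set.ncard_image_of_injOn hinj,
        show (Set.Icc j0 (j0 + N)) = ↑(Finset.Icc j0 (j0 + N)) by simp,
        Set.ncard_coe_finset, Nat.card_Icc]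
      omega
    calc N + 1 = (b '' Set.Icc j0 (j0 + N)).ncard := hcard.symm
      _ ≤ F (j0 + N) := Set.ncard_le_ncard hsub (finBt _)
  have hgj1 : 0 ≤ g (j0 + N) := by
    have := hGle (j0 + N)
    simp only [hgdef]
    omega
  -- discrete IVT
  obtain ⟨j, hjge, hj⟩ := int_ivt g j0 (j0 + N) (by omega) hgj0 hgj1 hstep
  have hFG : F j = G j := by simp only [hgdef] at hj; omega
  -- the witness b j lies in the candidate set
  set S := {y | y ∈ B ∧ x < y ∧ (B ∩ Set.Icc x y).ncard = (A ∩ Set.Icc x y).ncard}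
    with hSdef
  have hy0 : b j ∈ S := ⟨⟨j, hj01.trans hjge, rfl⟩, hj0x.trans_le (hble hj01 hjge), hFG⟩
  -- extract the minimum
  have hTsub : S ∩ Set.Iic (b j) ⊆ B ∩ Set.Icc x (b j) := by
    rintro y ⟨⟨h1, h2, -⟩, h3⟩
    exact ⟨h1, h2.le, h3⟩
  have hTfin : (S ∩ Set.Iic (b j)).Finite := (finBt _).subset hTsub
  have hTne : (S ∩ Set.Iic (b j)).Nonempty := ⟨b j, hy0, Set.mem_Iic.mpr le_rfl⟩
  obtain ⟨m, hmT, hmmin⟩ := Set.exists_min_image _ id hTfin hTne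
  refine ⟨m, hmT.1, fun y hy => ?_⟩
  by_cases hyle : y ≤ b j
  · exact hmmin y ⟨hy, hyle⟩
  · push_neg at hyle
    exact (hmT.2.trans hyle.le)
end

section
/- There exists N ∈ ℕ such that the stable allocation map satisfies τ(a_i) = b_i for all i ≥ N. -/
open Set Filter

lemma ncard_Icc_nat (m n : ℕ) : (Set.Icc m n).ncard = n + 1 - m := by
  rw [← Finset.coe_Icc, Set.ncard_coe_finset, Nat.card_Icc]

/-- There exists `N ∈ ℕ` such that the stable allocation map
`τ(a) = min{b ∈ B : b > a, |B ∩ [a,b]| = |A ∩ [a,b]|}` satisfies `τ(a_i) = b_i`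
for all `i ≥ N`.  (The claim `τ(a_i) = b_i` is expressed by saying that `b_i` is
the least element of the defining set.) -/
theorem stable_allocation_eventually_matches
    (a b : ℕ → ℝ)
    (ha : StrictAntiOn a (Set.Ici 1)) (hb : StrictMonoOn b (Set.Ici 1))
    (ha' : Tendsto a atTop atBot) (hb' : Tendsto b atTop atTop)
    (hdisj : Disjoint (a '' Set.Ici 1) (b '' Set.Ici 1)) :
    ∃ N : ℕ, 1 ≤ N ∧ ∀ i ≥ N,
      IsLeast {y | y ∈ b '' Set.Ici 1 ∧ a i < y ∧
        ((b '' Set.Ici 1) ∩ Set.Icc (a i) y).ncard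
          = ((a '' Set.Ici 1) ∩ Set.Icc (a i) y).ncard} (b i) := by
  obtain ⟨N1, hN1⟩ := eventually_atTop.mp (ha'.eventually_lt_atBot (b 1))
  obtain ⟨N2, hN2⟩ := eventually_atTop.mp (hb'.eventually_gt_atTop (a 1))
  set M := max N1 1 with hM
  set K := max N2 1 with hK
  have hM1 : 1 ≤ M := le_max_right _ _
  have hK1 : 1 ≤ K := le_max_right _ _
  -- a k < b 1 for k ≥ M ; a 1 < b j for j ≥ K
  have hMa : ∀ k, M ≤ k → a k < b 1 := fun k hk => hN1 k (le_trans (le_max_left _ _) hk)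
  have hKb : ∀ j, K ≤ j → a 1 < b j := fun j hj => hN2 j (le_trans (le_max_left _ _) hj)
  have ha1 : ∀ k, 1 ≤ k → a k ≤ a 1 := fun k hk =>
    ha.antitoneOn (Set.mem_Ici.mpr le_rfl) (Set.mem_Ici.mpr hk) hk
  have hb1 : ∀ k, 1 ≤ k → b 1 ≤ b k := fun k hk =>
    hb.monotoneOn (Set.mem_Ici.mpr le_rfl) (Set.mem_Ici.mpr hk) hk
  refine ⟨M + K, le_trans hM1 (Nat.le_add_right _ _), ?_⟩
  intro i hi
  have hi1 : 1 ≤ i := le_trans (le_trans hM1 (Nat.le_add_right _ _)) hi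
  have hiM : M ≤ i := le_trans (Nat.le_add_right _ _) hi
  have hiK : K ≤ i := le_trans (Nat.le_add_left _ _) hi
  have haib1 : a i < b 1 := hMa i hiM
  -- count of B ∩ [a i, b j]
  have hBcount : ∀ j, 1 ≤ j → ((b '' Set.Ici 1) ∩ Set.Icc (a i) (b j)).ncard = j := by
    intro j hj
    have hEq : (b '' Set.Ici 1) ∩ Set.Icc (a i) (b j) = b '' Set.Icc 1 j := by
      ext y
      constructor
      · rintro ⟨⟨k, hk, rfl⟩, _, hy2⟩
        exact ⟨k, ⟨hk, (hb.le_iff_le hk (Set.mem_Ici.mpr hj)).mp hy2⟩, rfl⟩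
      · rintro ⟨k, ⟨hk1, hkj⟩, rfl⟩
        exact ⟨⟨k, hk1, rfl⟩,
          ⟨le_of_lt (lt_of_lt_of_le haib1 (hb1 k hk1)),
           hb.monotoneOn (Set.mem_Ici.mpr hk1) (Set.mem_Ici.mpr hj) hkj⟩⟩
    rw [hEq, Set.ncard_image_of_injOn (hb.injOn.mono Set.Icc_subset_Ici_self),
      _root_.ncard_Icc_nat]
    omega
  -- count of A ∩ [a i, b j]
  have hAcount : ∀ j, 1 ≤ j →
      ((a '' Set.Ici 1) ∩ Set.Icc (a i) (b j)).ncard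
        + {k | k ∈ Set.Icc 1 i ∧ b j < a k}.ncard = i := by
    intro j hj
    have hEq : (a '' Set.Ici 1) ∩ Set.Icc (a i) (b j)
        = a '' {k | k ∈ Set.Icc 1 i ∧ a k ≤ b j} := by
      ext y
      constructor
      · rintro ⟨⟨k, hk, rfl⟩, hy1, hy2⟩
        refine ⟨k, ⟨⟨hk, ?_⟩, hy2⟩, rfl⟩
        exact (ha.le_iff_ge (Set.mem_Ici.mpr hi1) hk).mp hy1
      · rintro ⟨k, ⟨⟨hk1, hki⟩, hkj⟩, rfl⟩
        exact ⟨⟨k, hk1, rfl⟩,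
          ⟨ha.antitoneOn (Set.mem_Ici.mpr hk1) (Set.mem_Ici.mpr hi1) hki, hkj⟩⟩
    have hsub : {k | k ∈ Set.Icc 1 i ∧ a k ≤ b j} ⊆ Set.Icc 1 i := fun k hk => hk.1
    have hsub' : {k | k ∈ Set.Icc 1 i ∧ b j < a k} ⊆ Set.Icc 1 i := fun k hk => hk.1
    rw [hEq, Set.ncard_image_of_injOn
      (ha.injOn.mono (hsub.trans Set.Icc_subset_Ici_self))]
    have hunion : {k | k ∈ Set.Icc 1 i ∧ a k ≤ b j} ∪ {k | k ∈ Set.Icc 1 i ∧ b j < a k}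
        = Set.Icc 1 i := by
      ext k
      simp only [Set.mem_union, Set.mem_setOf_eq]
      constructor
      · rintro (h | h) <;> exact h.1
      · intro h
        rcases le_or_gt (a k) (b j) with h' | h'
        · exact Or.inl ⟨h, h'⟩
        · exact Or.inr ⟨h, h'⟩
    have hdisj2 : Disjoint {k | k ∈ Set.Icc 1 i ∧ a k ≤ b j}
        {k | k ∈ Set.Icc 1 i ∧ b j < a k} := by
      rw [Set.disjoint_left]
      rintro k ⟨_, h1⟩ ⟨_, h2⟩
      exact absurd h1 (not_le.mpr h2)
    rw [← Set.ncard_union_eq hdisj2 ((Set.finite_Icc 1 i).subset hsub)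
      ((Set.finite_Icc 1 i).subset hsub'), hunion, _root_.ncard_Icc_nat]
    omega
  -- the "excess" set is empty when K ≤ j
  have hSempty : ∀ j, K ≤ j → {k | k ∈ Set.Icc 1 i ∧ b j < a k} = ∅ := by
    intro j hj
    ext k
    simp only [Set.mem_setOf_eq, Set.mem_empty_iff_false, iff_false, not_and]
    rintro ⟨hk1, _⟩ hlt
    exact absurd hlt (not_lt.mpr (le_of_lt (lt_of_le_of_lt (ha1 k hk1) (hKb j hj))))
  constructor
  · refine ⟨⟨i, hi1, rfl⟩, lt_of_lt_of_le haib1 (hb1 i hi1), ?_⟩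
    have h1 := hAcount i hi1
    rw [hSempty i hiK, Set.ncard_empty] at h1
    rw [hBcount i hi1]
    omega
  · rintro y ⟨⟨j, hj1, rfl⟩, _, hcard⟩
    have hj1' : (1 : ℕ) ≤ j := hj1
    by_contra hlt
    push_neg at hlt
    have hji : j < i := by
      by_contra h
      push_neg at h
      exact absurd (hb.monotoneOn (Set.mem_Ici.mpr hi1) (Set.mem_Ici.mpr hj1') h)
        (not_le.mpr hlt)
    rw [hBcount j hj1'] at hcard
    have h1 := hAcount j hj1'
    rcases le_or_gt K j with hKj | hjK
    · rw [hSempty j hKj, Set.ncard_empty] at h1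
      omega
    · -- S j ⊆ Icc 1 (M - 1)
      have hsub : {k | k ∈ Set.Icc 1 i ∧ b j < a k} ⊆ Set.Icc 1 (M - 1) := by
        rintro k ⟨⟨hk1, _⟩, hlt'⟩
        refine ⟨hk1, ?_⟩
        by_contra h
        push_neg at h
        have hMk : M ≤ k := by omega
        exact absurd hlt' (not_lt.mpr (le_of_lt (lt_of_lt_of_le (hMa k hMk) (hb1 j hj1'))))
      have hm : {k | k ∈ Set.Icc 1 i ∧ b j < a k}.ncard ≤ M - 1 := by
        have := Set.ncard_le_ncard hsub (Set.finite_Icc _ _)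
        rw [_root_.ncard_Icc_nat] at this
        omega
      omega
end

section
/- For every strictly increasing double-sided sequence (a_n)_{n∈ℤ} of reals with a_n → +∞ as n → +∞ and a_n → −∞ as n → −∞, every matrix (π_{i,j})_{i,j≥1} of nonnegative reals with Σ_{j=1}^∞ π_{i,j} = 1 for all i ≥ 1 and Σ_{i=1}^∞ π_{i,j} = 1 for all j ≥ 1, every concave function ψ : [0,∞) → [0,∞), and every n ≥ 1, one has (as an inequality in [0,∞]) Σ_{i=1}^{n} Σ_{j=1}^{∞} π_{i,j} ψ(a_i − a_{−j}) + Σ_{i=1}^{∞} Σ_{j=1}^{n} π_{i,j} ψ(a_i − a_{−j}) ≥ 2 Σ_{i=1}^{n} ψ(a_i − a_{−i}). -/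
open Set Filter

namespace DSCI

variable (a : ℤ → ℝ) (ψ : ℝ → ℝ) (n : ℕ)

noncomputable def dd (k : ℕ) : ℝ := a (k : ℤ) - a (-(k : ℤ))

noncomputable def sl (m : ℕ) : ℝ :=
  if m < n then (ψ (dd a (m+1)) - ψ (dd a m)) / (dd a (m+1) - dd a m) else 0

noncomputable def cc (m : ℕ) : ℝ := sl a ψ n m - sl a ψ n (m+1)

noncomputable def AA (i : ℕ) : ℝ :=
  ∑ m ∈ Finset.range n, cc a ψ n m * max (a ((m+1 : ℕ) : ℤ) - a (i : ℤ)) 0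

noncomputable def BB (j : ℕ) : ℝ :=
  ∑ m ∈ Finset.range n, cc a ψ n m * max (a (-(j : ℤ)) - a (-((m+1 : ℕ) : ℤ))) 0

variable {a ψ n}

lemma dd_zero : dd a 0 = 0 := by simp [dd]

lemma dd_strictMono (ha : StrictMono a) : StrictMono (dd a) := by
  intro k l h
  have h1 : a (k : ℤ) < a (l : ℤ) := ha (by exact_mod_cast h)
  have h2 : a (-(l : ℤ)) < a (-(k : ℤ)) := ha (by omega)
  unfold dd; linarith

lemma dd_nonneg (ha : StrictMono a) (k : ℕ) : 0 ≤ dd a k := by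
  have := (dd_strictMono ha).monotone (Nat.zero_le k)
  rwa [dd_zero] at this

lemma psi_mono (hψ : ConcaveOn ℝ (Set.Ici 0) ψ) (hψ0 : ∀ x ∈ Set.Ici (0:ℝ), 0 ≤ ψ x)
    {x y : ℝ} (hx : 0 ≤ x) (hxy : x ≤ y) : ψ x ≤ ψ y := by
  rcases eq_or_lt_of_le hxy with rfl | hlt
  · exact le_refl _
  by_contra hcon
  push_neg at hcon
  have hy : (0:ℝ) ≤ y := le_trans hx hxy
  set c : ℝ := (ψ x - ψ y) / (y - x) with hc
  have hyx : 0 < y - x := by linarith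
  have hcpos : 0 < c := div_pos (by linarith) hyx
  set z : ℝ := y + ψ y / c + 1 with hz
  have hyz : y < z := by
    have : 0 ≤ ψ y / c := div_nonneg (hψ0 y hy) hcpos.le
    rw [hz]; linarith
  have hslope := hψ.slope_anti_adjacent (show x ∈ Set.Ici (0:ℝ) from hx)
    (show z ∈ Set.Ici (0:ℝ) from le_trans hy hyz.le) hlt hyz
  have h2 : (ψ y - ψ x) / (y - x) = -c := by rw [hc]; ring
  rw [h2] at hslope
  have hzy : 0 < z - y := by linarith
  have h3 : ψ z - ψ y ≤ -c * (z - y) := by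
    have := mul_le_mul_of_nonneg_right hslope hzy.le
    rwa [div_mul_cancel₀ _ (ne_of_gt hzy)] at this
  have h6 : z - y = ψ y / c + 1 := by rw [hz]; ring
  rw [h6] at h3
  have h5 : c * (ψ y / c) = ψ y := mul_div_cancel₀ _ (ne_of_gt hcpos)
  have h8 : -c * (ψ y / c + 1) = -(ψ y) - c := by rw [neg_mul, mul_add, h5, mul_one]; ring
  rw [h8] at h3
  have := hψ0 z (le_trans hy hyz.le)
  linarith

lemma chord (hψ : ConcaveOn ℝ (Set.Ici 0) ψ) {p q x : ℝ} (hp : 0 ≤ p) (hpq : p < q)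
    (hx1 : p ≤ x) (hx2 : x ≤ q) :
    ψ p + (ψ q - ψ p) / (q - p) * (x - p) ≤ ψ x := by
  have hqp : 0 < q - p := by linarith
  set μ : ℝ := (x - p) / (q - p) with hμ
  set lam : ℝ := (q - x) / (q - p) with hlam
  have h1 : 0 ≤ lam := div_nonneg (by linarith) hqp.le
  have h2 : 0 ≤ μ := div_nonneg (by linarith) hqp.le
  have h3 : lam + μ = 1 := by rw [hlam, hμ]; field_simp; ring
  have hq0 : (0:ℝ) ≤ q := le_trans hp hpq.le
  have hcomb := hψ.2 (show p ∈ Set.Ici (0:ℝ) from hp) (show q ∈ Set.Ici (0:ℝ) from hq0) h1 h2 h3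
  have harg : lam • p + μ • q = x := by
    simp only [smul_eq_mul, hlam, hμ]; field_simp; ring
  rw [harg] at hcomb
  have hval : ψ p + (ψ q - ψ p) / (q - p) * (x - p) = lam • ψ p + μ • ψ q := by
    simp only [smul_eq_mul, hlam, hμ]; field_simp; ring
  rw [hval]
  exact hcomb

lemma sl_nonneg (ha : StrictMono a) (hψ : ConcaveOn ℝ (Set.Ici 0) ψ)
    (hψ0 : ∀ x ∈ Set.Ici (0:ℝ), 0 ≤ ψ x) (m : ℕ) : 0 ≤ sl a ψ n m := by
  unfold sl
  split
  · apply div_nonneg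
    · have := psi_mono hψ hψ0 (dd_nonneg ha m) ((dd_strictMono ha).le_iff_le.mpr (Nat.le_succ m))
      linarith
    · have := dd_strictMono ha (Nat.lt_succ_self m); linarith
  · exact le_refl _

lemma sl_anti (ha : StrictMono a) (hψ : ConcaveOn ℝ (Set.Ici 0) ψ)
    (hψ0 : ∀ x ∈ Set.Ici (0:ℝ), 0 ≤ ψ x) (m : ℕ) : sl a ψ n (m+1) ≤ sl a ψ n m := by
  by_cases h1 : m + 1 < n
  · have hm : m < n := by omega
    unfold sl
    rw [if_pos h1, if_pos hm]
    exact hψ.slope_anti_adjacent (dd_nonneg ha m) (dd_nonneg ha (m+2))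
      (dd_strictMono ha (Nat.lt_succ_self m)) (dd_strictMono ha (Nat.lt_succ_self (m+1)))
  · have : sl a ψ n (m+1) = 0 := by unfold sl; rw [if_neg h1]
    rw [this]
    exact sl_nonneg ha hψ hψ0 m

lemma cc_nonneg (ha : StrictMono a) (hψ : ConcaveOn ℝ (Set.Ici 0) ψ)
    (hψ0 : ∀ x ∈ Set.Ici (0:ℝ), 0 ≤ ψ x) (m : ℕ) : 0 ≤ cc a ψ n m :=
  sub_nonneg.mpr (sl_anti ha hψ hψ0 m)

lemma sl_n : sl a ψ n n = 0 := by unfold sl; rw [if_neg (lt_irrefl n)]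

lemma tel {k : ℕ} (hk : k ≤ n) : ∑ m ∈ Finset.Ico k n, cc a ψ n m = sl a ψ n k := by
  unfold cc
  rw [Finset.sum_Ico_eq_sub _ hk, Finset.sum_range_sub' (fun m => sl a ψ n m),
    Finset.sum_range_sub' (fun m => sl a ψ n m), sl_n]
  ring

lemma slmul (ha : StrictMono a) {k : ℕ} (hk : k < n) :
    sl a ψ n k * (dd a (k+1) - dd a k) = ψ (dd a (k+1)) - ψ (dd a k) := by
  unfold sl
  rw [if_pos hk]
  have := dd_strictMono ha (Nat.lt_succ_self k)
  exact div_mul_cancel₀ _ (by linarith)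

lemma identJ (ha : StrictMono a) : ∀ k, k ≤ n →
    ψ 0 + ∑ m ∈ Finset.range k, cc a ψ n m * dd a (m+1)
      = ψ (dd a k) - sl a ψ n k * dd a k := by
  intro k
  induction k with
  | zero => intro _; simp [dd_zero]
  | succ k ih =>
    intro hk1
    have hk : k < n := by omega
    have ihh := ih (by omega)
    rw [Finset.sum_range_succ, ← add_assoc, ihh]
    have hs := slmul ha hk (ψ := ψ)
    unfold cc
    nlinarith [hs]

lemma identI (ha : StrictMono a) {k : ℕ} (hk : k ≤ n) :
    ψ (dd a k) + ∑ m ∈ Finset.range n, cc a ψ n m * max (dd a (m+1) - dd a k) 0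
      = ψ (dd a n) := by
  have hsplit : ∑ m ∈ Finset.range k, cc a ψ n m * max (dd a (m+1) - dd a k) 0
      + ∑ m ∈ Finset.Ico k n, cc a ψ n m * max (dd a (m+1) - dd a k) 0
      = ∑ m ∈ Finset.range n, cc a ψ n m * max (dd a (m+1) - dd a k) 0 := by
    simp only [Finset.range_eq_Ico]
    exact Finset.sum_Ico_consecutive _ (Nat.zero_le k) hk
  have h1 : ∑ m ∈ Finset.range k, cc a ψ n m * max (dd a (m+1) - dd a k) 0 = 0 := by
    apply Finset.sum_eq_zero
    intro m hm
    have hm' : m + 1 ≤ k := Finset.mem_range.mp hm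
    have : dd a (m+1) ≤ dd a k := (dd_strictMono ha).monotone hm'
    rw [max_eq_right (by linarith), mul_zero]
  have h2 : ∑ m ∈ Finset.Ico k n, cc a ψ n m * max (dd a (m+1) - dd a k) 0
      = ∑ m ∈ Finset.Ico k n, (cc a ψ n m * dd a (m+1) - cc a ψ n m * dd a k) := by
    apply Finset.sum_congr rfl
    intro m hm
    have hm' : k ≤ m := (Finset.mem_Ico.mp hm).1
    have : dd a k < dd a (m+1) := dd_strictMono ha (by omega)
    rw [max_eq_left (by linarith)]
    ring
  have h3 : ∑ m ∈ Finset.Ico k n, cc a ψ n m * dd a (m+1)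
      = (ψ (dd a n) - sl a ψ n n * dd a n) - (ψ (dd a k) - sl a ψ n k * dd a k) := by
    rw [Finset.sum_Ico_eq_sub _ hk]
    have jn := identJ (ψ := ψ) (n := n) ha n (le_refl n)
    have jk := identJ (ψ := ψ) (n := n) ha k hk
    linarith
  have h4 : ∑ m ∈ Finset.Ico k n, cc a ψ n m * dd a k = sl a ψ n k * dd a k := by
    rw [← Finset.sum_mul, tel hk]
  rw [← hsplit, h1, h2, Finset.sum_sub_distrib, h3, h4, sl_n]
  ring

lemma AA_nonneg (ha : StrictMono a) (hψ : ConcaveOn ℝ (Set.Ici 0) ψ)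
    (hψ0 : ∀ x ∈ Set.Ici (0:ℝ), 0 ≤ ψ x) (i : ℕ) : 0 ≤ AA a ψ n i :=
  Finset.sum_nonneg fun m _ => mul_nonneg (cc_nonneg ha hψ hψ0 m) (le_max_right _ _)

lemma BB_nonneg (ha : StrictMono a) (hψ : ConcaveOn ℝ (Set.Ici 0) ψ)
    (hψ0 : ∀ x ∈ Set.Ici (0:ℝ), 0 ≤ ψ x) (j : ℕ) : 0 ≤ BB a ψ n j :=
  Finset.sum_nonneg fun m _ => mul_nonneg (cc_nonneg ha hψ hψ0 m) (le_max_right _ _)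

lemma AA_zero (ha : StrictMono a) {k : ℕ} (hk : n ≤ k) : AA a ψ n k = 0 := by
  apply Finset.sum_eq_zero
  intro m hm
  have hm' : m + 1 ≤ k := by have := Finset.mem_range.mp hm; omega
  have : a ((m+1 : ℕ) : ℤ) ≤ a (k : ℤ) := ha.monotone (by exact_mod_cast hm')
  rw [max_eq_right (by linarith), mul_zero]

lemma BB_zero (ha : StrictMono a) {k : ℕ} (hk : n ≤ k) : BB a ψ n k = 0 := by
  apply Finset.sum_eq_zero
  intro m hm
  have hm' : m + 1 ≤ k := by have := Finset.mem_range.mp hm; omega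
  have : a (-(k : ℤ)) ≤ a (-((m+1 : ℕ) : ℤ)) := ha.monotone (by
    have : ((m+1 : ℕ) : ℤ) ≤ (k : ℤ) := by exact_mod_cast hm'
    omega)
  rw [max_eq_right (by linarith), mul_zero]

lemma AB_eq (ha : StrictMono a) (k : ℕ) :
    AA a ψ n k + BB a ψ n k
      = ∑ m ∈ Finset.range n, cc a ψ n m * max (dd a (m+1) - dd a k) 0 := by
  unfold AA BB
  rw [← Finset.sum_add_distrib]
  apply Finset.sum_congr rfl
  intro m _
  rw [← mul_add]
  congr 1
  by_cases h : m + 1 ≤ k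
  · have h1 : a ((m+1 : ℕ) : ℤ) ≤ a (k : ℤ) := ha.monotone (by exact_mod_cast h)
    have h2 : a (-(k : ℤ)) ≤ a (-((m+1 : ℕ) : ℤ)) := ha.monotone (by
      have : ((m+1 : ℕ) : ℤ) ≤ (k : ℤ) := by exact_mod_cast h
      omega)
    have h3 : dd a (m+1) ≤ dd a k := (dd_strictMono ha).monotone h
    rw [max_eq_right (by linarith), max_eq_right (by linarith), max_eq_right (by linarith)]
    ring
  · push_neg at h
    have h1 : a (k : ℤ) ≤ a ((m+1 : ℕ) : ℤ) := ha.monotone (by exact_mod_cast h.le)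
    have h2 : a (-((m+1 : ℕ) : ℤ)) ≤ a (-(k : ℤ)) := ha.monotone (by
      have : (k : ℤ) ≤ ((m+1 : ℕ) : ℤ) := by exact_mod_cast h.le
      omega)
    have h3 : dd a k ≤ dd a (m+1) := (dd_strictMono ha).monotone h.le
    rw [max_eq_left (by linarith), max_eq_left (by linarith), max_eq_left (by linarith)]
    unfold dd
    ring

lemma psi_dd (ha : StrictMono a) (hψ : ConcaveOn ℝ (Set.Ici 0) ψ)
    (hψ0 : ∀ x ∈ Set.Ici (0:ℝ), 0 ≤ ψ x) {k : ℕ} (hk : k ≤ n) :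
    ψ (dd a k) = ψ (dd a n) - AA a ψ n k - BB a ψ n k := by
  have h1 := identI (ψ := ψ) ha hk
  have h2 := AB_eq (ψ := ψ) (n := n) ha k
  linarith

lemma minor (ha : StrictMono a) (hψ : ConcaveOn ℝ (Set.Ici 0) ψ)
    (hψ0 : ∀ x ∈ Set.Ici (0:ℝ), 0 ≤ ψ x) {x : ℝ} (hx : 0 ≤ x) :
    ψ 0 + ∑ m ∈ Finset.range n, cc a ψ n m * min x (dd a (m+1)) ≤ ψ x := by
  have key : ∀ k, k ≤ n → ∀ y : ℝ, 0 ≤ y → y ≤ dd a k →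
      ψ 0 + ∑ m ∈ Finset.range n, cc a ψ n m * min y (dd a (m+1)) ≤ ψ y := by
    intro k
    induction k with
    | zero =>
      intro _ y hy1 hy2
      rw [dd_zero] at hy2
      have hy0 : y = 0 := le_antisymm hy2 hy1
      subst hy0
      have : ∑ m ∈ Finset.range n, cc a ψ n m * min 0 (dd a (m+1)) = 0 := by
        apply Finset.sum_eq_zero
        intro m _
        rw [min_eq_left (dd_nonneg ha (m+1)), mul_zero]
      rw [this, add_zero]
    | succ k ih =>
      intro hk1 y hy1 hy2
      by_cases hyk : y ≤ dd a k
      · exact ih (by omega) y hy1 hyk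
      push_neg at hyk
      have hk : k < n := by omega
      have hsplit : ∑ m ∈ Finset.range k, cc a ψ n m * min y (dd a (m+1))
          + ∑ m ∈ Finset.Ico k n, cc a ψ n m * min y (dd a (m+1))
          = ∑ m ∈ Finset.range n, cc a ψ n m * min y (dd a (m+1)) := by
        simp only [Finset.range_eq_Ico]
        exact Finset.sum_Ico_consecutive _ (Nat.zero_le k) (by omega)
      have h1 : ∑ m ∈ Finset.range k, cc a ψ n m * min y (dd a (m+1))
          = ∑ m ∈ Finset.range k, cc a ψ n m * dd a (m+1) := by
        apply Finset.sum_congr rfl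
        intro m hm
        have : dd a (m+1) ≤ dd a k := (dd_strictMono ha).monotone (Finset.mem_range.mp hm)
        rw [min_eq_right (by linarith)]
      have h2 : ∑ m ∈ Finset.Ico k n, cc a ψ n m * min y (dd a (m+1))
          = (∑ m ∈ Finset.Ico k n, cc a ψ n m) * y := by
        rw [Finset.sum_mul]
        apply Finset.sum_congr rfl
        intro m hm
        have hm' : k ≤ m := (Finset.mem_Ico.mp hm).1
        have : dd a (k+1) ≤ dd a (m+1) := (dd_strictMono ha).monotone (by omega)
        rw [min_eq_left (by linarith)]
      have hJ := identJ (ψ := ψ) (n := n) ha k (by omega)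
      have hT := tel (a := a) (ψ := ψ) (show k ≤ n by omega)
      have hch := chord hψ (dd_nonneg ha k) (dd_strictMono ha (Nat.lt_succ_self k)) hyk.le hy2
      have hsl : sl a ψ n k = (ψ (dd a (k+1)) - ψ (dd a k)) / (dd a (k+1) - dd a k) := by
        unfold sl; rw [if_pos hk]
      rw [← hsplit, h1, h2, hT]
      rw [hsl] at hJ ⊢
      nlinarith [hch, hJ]
  by_cases hxn : x ≤ dd a n
  · exact key n (le_refl n) x hx hxn
  push_neg at hxn
  have h1 : ∑ m ∈ Finset.range n, cc a ψ n m * min x (dd a (m+1))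
      = ∑ m ∈ Finset.range n, cc a ψ n m * dd a (m+1) := by
    apply Finset.sum_congr rfl
    intro m hm
    have hm' : m + 1 ≤ n := Finset.mem_range.mp hm
    have : dd a (m+1) ≤ dd a n := (dd_strictMono ha).monotone hm'
    rw [min_eq_right (by linarith)]
  have hJ := identJ (ψ := ψ) (n := n) ha n (le_refl n)
  rw [h1, hJ, sl_n]
  have := psi_mono hψ hψ0 (dd_nonneg ha n) hxn.le
  linarith

lemma pointwise (ha : StrictMono a) (hψ : ConcaveOn ℝ (Set.Ici 0) ψ)
    (hψ0 : ∀ x ∈ Set.Ici (0:ℝ), 0 ≤ ψ x) (hn : 1 ≤ n) {i j : ℕ} (hi : 1 ≤ i) (hj : 1 ≤ j) :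
    ψ (dd a n) - AA a ψ n i - BB a ψ n j ≤ ψ (a (i : ℤ) - a (-(j : ℤ))) := by
  set x : ℝ := a (i : ℤ) - a (-(j : ℤ)) with hxdef
  have hx : 0 ≤ x := by
    have : a (-(j : ℤ)) < a (i : ℤ) := ha (by omega)
    rw [hxdef]; linarith
  have hminor := minor (n := n) ha hψ hψ0 hx
  have hterm : ∀ m ∈ Finset.range n,
      cc a ψ n m * (dd a (m+1) - max (a ((m+1 : ℕ) : ℤ) - a (i : ℤ)) 0
        - max (a (-(j : ℤ)) - a (-((m+1 : ℕ) : ℤ))) 0)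
      ≤ cc a ψ n m * min x (dd a (m+1)) := by
    intro m _
    apply mul_le_mul_of_nonneg_left _ (cc_nonneg ha hψ hψ0 m)
    have hα : 0 ≤ max (a ((m+1 : ℕ) : ℤ) - a (i : ℤ)) 0 := le_max_right _ _
    have hβ : 0 ≤ max (a (-(j : ℤ)) - a (-((m+1 : ℕ) : ℤ))) 0 := le_max_right _ _
    rcases le_or_gt (dd a (m+1)) x with h | h
    · rw [min_eq_right h]; linarith
    · rw [min_eq_left h.le]
      have h1 : a ((m+1 : ℕ) : ℤ) - a (i : ℤ) ≤ max (a ((m+1 : ℕ) : ℤ) - a (i : ℤ)) 0 :=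
        le_max_left _ _
      have h2 : a (-(j : ℤ)) - a (-((m+1 : ℕ) : ℤ))
          ≤ max (a (-(j : ℤ)) - a (-((m+1 : ℕ) : ℤ))) 0 := le_max_left _ _
      have h3 : dd a (m+1) - x = (a ((m+1 : ℕ) : ℤ) - a (i : ℤ))
          + (a (-(j : ℤ)) - a (-((m+1 : ℕ) : ℤ))) := by
        rw [hxdef]; unfold dd; ring
      linarith
  have hsum := Finset.sum_le_sum hterm
  have hexp : ∑ m ∈ Finset.range n,
      cc a ψ n m * (dd a (m+1) - max (a ((m+1 : ℕ) : ℤ) - a (i : ℤ)) 0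
        - max (a (-(j : ℤ)) - a (-((m+1 : ℕ) : ℤ))) 0)
      = (∑ m ∈ Finset.range n, cc a ψ n m * dd a (m+1)) - AA a ψ n i - BB a ψ n j := by
    unfold AA BB
    rw [← Finset.sum_sub_distrib, ← Finset.sum_sub_distrib]
    apply Finset.sum_congr rfl
    intro m _
    ring
  have hJ := identJ (ψ := ψ) (n := n) ha n (le_refl n)
  rw [sl_n] at hJ
  rw [hexp] at hsum
  linarith

lemma ofReal_sum_le {α : Type*} (s : Finset α) (f : α → ℝ) :
    ENNReal.ofReal (∑ i ∈ s, f i) ≤ ∑ i ∈ s, ENNReal.ofReal (f i) := by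
  classical
  induction s using Finset.induction_on with
  | empty => simp
  | insert _ _ hx ih =>
    rw [Finset.sum_insert hx, Finset.sum_insert hx]
    exact le_trans (ENNReal.ofReal_add_le) (add_le_add_right ih _)

lemma ofReal_tsum_le (r : ℕ → ℝ) (hr : Summable r) :
    ENNReal.ofReal (∑' j, r j) ≤ ∑' j, ENNReal.ofReal (r j) := by
  have h1 : Tendsto (fun N => ∑ j ∈ Finset.range N, r j) atTop (nhds (∑' j, r j)) :=
    hr.hasSum.tendsto_sum_nat
  have h2 : Tendsto (fun N => ENNReal.ofReal (∑ j ∈ Finset.range N, r j)) atTop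
      (nhds (ENNReal.ofReal (∑' j, r j))) :=
    (ENNReal.continuous_ofReal.tendsto _).comp h1
  refine le_of_tendsto h2 (Filter.Eventually.of_forall fun N => ?_)
  exact le_trans (ofReal_sum_le _ _) (ENNReal.sum_le_tsum _)

end DSCI

/-- Corollary: for every strictly increasing two-sided sequence
`(a_n)_{n∈ℤ}` unbounded above and below, every doubly stochastic matrix
`(π_{i,j})_{i,j ≥ 1}` and every concave `ψ : [0,∞) → [0,∞)`, for all `n ≥ 1`
one has (in `[0,∞]`)
`Σ_{i=1}^{n} Σ_{j=1}^{∞} π_{i,j} ψ(a_i − a_{−j}) + Σ_{i=1}^{∞} Σ_{j=1}^{n} π_{i,j} ψ(a_i − a_{−j})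
  ≥ 2 Σ_{i=1}^{n} ψ(a_i − a_{−i})`. -/
theorem double_sided_concavity_inequality
    (a : ℤ → ℝ) (ha : StrictMono a)
    (htop : Tendsto a atTop atTop) (hbot : Tendsto a atBot atBot)
    (π : ℕ → ℕ → ℝ) (hπ0 : ∀ i j, 0 ≤ π i j)
    (hrow : ∀ i : ℕ, 1 ≤ i → HasSum (fun j : ℕ => π i (j + 1)) 1)
    (hcol : ∀ j : ℕ, 1 ≤ j → HasSum (fun i : ℕ => π (i + 1) j) 1)
    (ψ : ℝ → ℝ) (hψ : ConcaveOn ℝ (Set.Ici 0) ψ) (hψ0 : ∀ x ∈ Set.Ici (0:ℝ), 0 ≤ ψ x)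
    (n : ℕ) (hn : 1 ≤ n) :
    2 * ∑ i ∈ Finset.Icc 1 n, ENNReal.ofReal (ψ (a (i : ℤ) - a (-(i : ℤ))))
      ≤ (∑ i ∈ Finset.Icc 1 n,
            ∑' j : ℕ, ENNReal.ofReal (π i (j + 1) * ψ (a (i : ℤ) - a (-((j : ℤ) + 1)))))
        + ∑ j ∈ Finset.Icc 1 n,
            ∑' i : ℕ, ENNReal.ofReal (π (i + 1) j * ψ (a ((i : ℤ) + 1) - a (-(j : ℤ)))) := by
  classical
  set G : ℝ := ψ (DSCI.dd a n) with hG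
  -- the common lower-bound sum
  have hXeq : (∑ i ∈ Finset.Icc 1 n, ENNReal.ofReal (ψ (a (i : ℤ) - a (-(i : ℤ)))))
      = ∑ i ∈ Finset.Icc 1 n, ENNReal.ofReal (ψ (DSCI.dd a i)) := rfl
  have hψdd : ∀ i ∈ Finset.Icc 1 n, ψ (DSCI.dd a i)
      = G - DSCI.AA a ψ n i - DSCI.BB a ψ n i := by
    intro i hi
    exact DSCI.psi_dd ha hψ hψ0 (Finset.mem_Icc.mp hi).2
  have hXofReal : (∑ i ∈ Finset.Icc 1 n, ENNReal.ofReal (ψ (DSCI.dd a i)))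
      = ENNReal.ofReal (∑ i ∈ Finset.Icc 1 n, ψ (DSCI.dd a i)) :=
    (ENNReal.ofReal_sum_of_nonneg fun i _ => hψ0 _ (DSCI.dd_nonneg ha i)).symm
  -- reindexing Icc 1 n ↔ range n
  have hreindex : ∀ f : ℕ → ℝ, ∑ i ∈ Finset.Icc 1 n, f i = ∑ i ∈ Finset.range n, f (i+1) := by
    intro f
    rw [← Finset.Ico_add_one_right_eq_Icc, Finset.sum_Ico_eq_sum_range]
    simp [add_comm]
  -- partial column sums are ≤ 1
  have hcolle : ∀ m : ℕ, ∑ i ∈ Finset.Icc 1 n, π i (m+1) ≤ 1 := by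
    intro m
    rw [hreindex (fun i => π i (m+1))]
    calc ∑ i ∈ Finset.range n, π (i+1) (m+1)
        ≤ ∑' i, π (i+1) (m+1) :=
          Summable.sum_le_tsum (Finset.range n) (fun b _ => hπ0 _ _) (hcol (m+1) (by omega)).summable
      _ = 1 := (hcol (m+1) (by omega)).tsum_eq
  -- partial row sums are ≤ 1
  have hrowle : ∀ m : ℕ, ∑ j ∈ Finset.Icc 1 n, π (m+1) j ≤ 1 := by
    intro m
    rw [hreindex (fun j => π (m+1) j)]
    calc ∑ j ∈ Finset.range n, π (m+1) (j+1)
        ≤ ∑' j, π (m+1) (j+1) :=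
          Summable.sum_le_tsum (Finset.range n) (fun b _ => hπ0 _ _) (hrow (m+1) (by omega)).summable
      _ = 1 := (hrow (m+1) (by omega)).tsum_eq
  rw [two_mul, hXeq]
  have hBnn : ∀ k, 0 ≤ DSCI.BB a ψ n k := DSCI.BB_nonneg ha hψ hψ0
  have hAnn : ∀ k, 0 ≤ DSCI.AA a ψ n k := DSCI.AA_nonneg ha hψ hψ0
  apply add_le_add
  -- FIRST SUM
  · set QQ : ℕ → ℝ := fun i => ∑ m ∈ Finset.range n, DSCI.BB a ψ n (m+1) * π i (m+1) with hQQ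
    have hreal1 : ∑ i ∈ Finset.Icc 1 n, ψ (DSCI.dd a i)
        ≤ ∑ i ∈ Finset.Icc 1 n, (G - DSCI.AA a ψ n i - QQ i) := by
      have hQB : ∑ i ∈ Finset.Icc 1 n, QQ i ≤ ∑ i ∈ Finset.Icc 1 n, DSCI.BB a ψ n i := by
        have h1 : ∑ i ∈ Finset.Icc 1 n, QQ i
            = ∑ m ∈ Finset.range n, DSCI.BB a ψ n (m+1) * ∑ i ∈ Finset.Icc 1 n, π i (m+1) := by
          rw [hQQ, Finset.sum_comm]
          exact Finset.sum_congr rfl fun m _ => (Finset.mul_sum _ _ _).symm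
        have h2 : ∑ m ∈ Finset.range n, DSCI.BB a ψ n (m+1) * ∑ i ∈ Finset.Icc 1 n, π i (m+1)
            ≤ ∑ m ∈ Finset.range n, DSCI.BB a ψ n (m+1) := by
          apply Finset.sum_le_sum
          intro m _
          calc DSCI.BB a ψ n (m+1) * ∑ i ∈ Finset.Icc 1 n, π i (m+1)
              ≤ DSCI.BB a ψ n (m+1) * 1 :=
                mul_le_mul_of_nonneg_left (hcolle m) (hBnn (m+1))
            _ = DSCI.BB a ψ n (m+1) := mul_one _
        rw [h1, hreindex (fun i => DSCI.BB a ψ n i)]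
        exact h2
      have e1 : ∑ i ∈ Finset.Icc 1 n, ψ (DSCI.dd a i)
          = ∑ i ∈ Finset.Icc 1 n, ((G - DSCI.AA a ψ n i) - DSCI.BB a ψ n i) :=
        Finset.sum_congr rfl hψdd
      have e2 : ∑ i ∈ Finset.Icc 1 n, ((G - DSCI.AA a ψ n i) - DSCI.BB a ψ n i)
          = ∑ i ∈ Finset.Icc 1 n, (G - DSCI.AA a ψ n i)
            - ∑ i ∈ Finset.Icc 1 n, DSCI.BB a ψ n i := Finset.sum_sub_distrib _ _
      have e3 : ∑ i ∈ Finset.Icc 1 n, ((G - DSCI.AA a ψ n i) - QQ i)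
          = ∑ i ∈ Finset.Icc 1 n, (G - DSCI.AA a ψ n i)
            - ∑ i ∈ Finset.Icc 1 n, QQ i := Finset.sum_sub_distrib _ _
      rw [e1, e2]
      have : ∑ i ∈ Finset.Icc 1 n, (G - DSCI.AA a ψ n i - QQ i)
          = ∑ i ∈ Finset.Icc 1 n, (G - DSCI.AA a ψ n i) - ∑ i ∈ Finset.Icc 1 n, QQ i := e3
      rw [this]
      linarith
    have hrowterm : ∀ i ∈ Finset.Icc 1 n,
        ENNReal.ofReal (G - DSCI.AA a ψ n i - QQ i)
          ≤ ∑' j : ℕ, ENNReal.ofReal (π i (j + 1) * ψ (a (i : ℤ) - a (-((j : ℤ) + 1)))) := by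
      intro i hi
      obtain ⟨hi1, hi2⟩ := Finset.mem_Icc.mp hi
      set r : ℕ → ℝ := fun j =>
        (G - DSCI.AA a ψ n i) * π i (j+1) - DSCI.BB a ψ n (j+1) * π i (j+1) with hrdef
      have hsummable : Summable (fun j => π i (j+1)) := (hrow i hi1).summable
      have hBvanish : ∀ j ∉ Finset.range n, DSCI.BB a ψ n (j+1) * π i (j+1) = 0 := by
        intro j hj
        have hnj : n ≤ j := le_of_not_gt fun hlt => hj (Finset.mem_range.mpr hlt)
        rw [DSCI.BB_zero ha (by omega), zero_mul]
      have hsumB : Summable (fun j => DSCI.BB a ψ n (j+1) * π i (j+1)) :=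
        summable_of_ne_finset_zero hBvanish
      have hr : Summable r := (hsummable.mul_left _).sub hsumB
      have htsum : ∑' j, r j = (G - DSCI.AA a ψ n i) - QQ i := by
        rw [Summable.tsum_sub (hsummable.mul_left _) hsumB, tsum_mul_left, (hrow i hi1).tsum_eq, mul_one]
        congr 1
        exact tsum_eq_sum hBvanish
      calc ENNReal.ofReal (G - DSCI.AA a ψ n i - QQ i)
          = ENNReal.ofReal (∑' j, r j) := by rw [htsum]
        _ ≤ ∑' j, ENNReal.ofReal (r j) := DSCI.ofReal_tsum_le r hr
        _ ≤ ∑' j : ℕ, ENNReal.ofReal (π i (j + 1) * ψ (a (i : ℤ) - a (-((j : ℤ) + 1)))) := by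
            apply ENNReal.tsum_le_tsum
            intro j
            apply ENNReal.ofReal_le_ofReal
            have hcast : (-((j : ℤ) + 1)) = (-(((j+1 : ℕ)) : ℤ)) := by push_cast; ring
            rw [hcast]
            have hpw := DSCI.pointwise ha hψ hψ0 hn hi1 (show 1 ≤ j + 1 by omega)
            have hrj : r j = π i (j+1) * (G - DSCI.AA a ψ n i - DSCI.BB a ψ n (j+1)) := by
              rw [hrdef]; ring
            rw [hrj]
            exact mul_le_mul_of_nonneg_left hpw (hπ0 _ _)
    calc ∑ i ∈ Finset.Icc 1 n, ENNReal.ofReal (ψ (DSCI.dd a i))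
        = ENNReal.ofReal (∑ i ∈ Finset.Icc 1 n, ψ (DSCI.dd a i)) := hXofReal
      _ ≤ ENNReal.ofReal (∑ i ∈ Finset.Icc 1 n, (G - DSCI.AA a ψ n i - QQ i)) :=
          ENNReal.ofReal_le_ofReal hreal1
      _ ≤ ∑ i ∈ Finset.Icc 1 n, ENNReal.ofReal (G - DSCI.AA a ψ n i - QQ i) :=
          DSCI.ofReal_sum_le _ _
      _ ≤ _ := Finset.sum_le_sum hrowterm
  -- SECOND SUM
  · set QQ' : ℕ → ℝ := fun j => ∑ m ∈ Finset.range n, DSCI.AA a ψ n (m+1) * π (m+1) j with hQQ'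
    have hreal2 : ∑ j ∈ Finset.Icc 1 n, ψ (DSCI.dd a j)
        ≤ ∑ j ∈ Finset.Icc 1 n, (G - DSCI.BB a ψ n j - QQ' j) := by
      have hQA : ∑ j ∈ Finset.Icc 1 n, QQ' j ≤ ∑ j ∈ Finset.Icc 1 n, DSCI.AA a ψ n j := by
        have h1 : ∑ j ∈ Finset.Icc 1 n, QQ' j
            = ∑ m ∈ Finset.range n, DSCI.AA a ψ n (m+1) * ∑ j ∈ Finset.Icc 1 n, π (m+1) j := by
          rw [hQQ', Finset.sum_comm]
          exact Finset.sum_congr rfl fun m _ => (Finset.mul_sum _ _ _).symm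
        have h2 : ∑ m ∈ Finset.range n, DSCI.AA a ψ n (m+1) * ∑ j ∈ Finset.Icc 1 n, π (m+1) j
            ≤ ∑ m ∈ Finset.range n, DSCI.AA a ψ n (m+1) := by
          apply Finset.sum_le_sum
          intro m _
          calc DSCI.AA a ψ n (m+1) * ∑ j ∈ Finset.Icc 1 n, π (m+1) j
              ≤ DSCI.AA a ψ n (m+1) * 1 :=
                mul_le_mul_of_nonneg_left (hrowle m) (hAnn (m+1))
            _ = DSCI.AA a ψ n (m+1) := mul_one _
        rw [h1, hreindex (fun j => DSCI.AA a ψ n j)]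
        exact h2
      have e1 : ∑ j ∈ Finset.Icc 1 n, ψ (DSCI.dd a j)
          = ∑ j ∈ Finset.Icc 1 n, ((G - DSCI.BB a ψ n j) - DSCI.AA a ψ n j) := by
        apply Finset.sum_congr rfl
        intro j hj
        rw [hψdd j hj]; ring
      have e2 : ∑ j ∈ Finset.Icc 1 n, ((G - DSCI.BB a ψ n j) - DSCI.AA a ψ n j)
          = ∑ j ∈ Finset.Icc 1 n, (G - DSCI.BB a ψ n j)
            - ∑ j ∈ Finset.Icc 1 n, DSCI.AA a ψ n j := Finset.sum_sub_distrib _ _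
      have e3 : ∑ j ∈ Finset.Icc 1 n, ((G - DSCI.BB a ψ n j) - QQ' j)
          = ∑ j ∈ Finset.Icc 1 n, (G - DSCI.BB a ψ n j)
            - ∑ j ∈ Finset.Icc 1 n, QQ' j := Finset.sum_sub_distrib _ _
      rw [e1, e2]
      have : ∑ j ∈ Finset.Icc 1 n, (G - DSCI.BB a ψ n j - QQ' j)
          = ∑ j ∈ Finset.Icc 1 n, (G - DSCI.BB a ψ n j) - ∑ j ∈ Finset.Icc 1 n, QQ' j := e3
      rw [this]
      linarith
    have hcolterm : ∀ j ∈ Finset.Icc 1 n,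
        ENNReal.ofReal (G - DSCI.BB a ψ n j - QQ' j)
          ≤ ∑' i : ℕ, ENNReal.ofReal (π (i + 1) j * ψ (a ((i : ℤ) + 1) - a (-(j : ℤ)))) := by
      intro j hj
      obtain ⟨hj1, hj2⟩ := Finset.mem_Icc.mp hj
      set r : ℕ → ℝ := fun i =>
        (G - DSCI.BB a ψ n j) * π (i+1) j - DSCI.AA a ψ n (i+1) * π (i+1) j with hrdef
      have hsummable : Summable (fun i => π (i+1) j) := (hcol j hj1).summable
      have hAvanish : ∀ i ∉ Finset.range n, DSCI.AA a ψ n (i+1) * π (i+1) j = 0 := by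
        intro i hi
        have hni : n ≤ i := le_of_not_gt fun hlt => hi (Finset.mem_range.mpr hlt)
        rw [DSCI.AA_zero ha (by omega), zero_mul]
      have hsumA : Summable (fun i => DSCI.AA a ψ n (i+1) * π (i+1) j) :=
        summable_of_ne_finset_zero hAvanish
      have hr : Summable r := (hsummable.mul_left _).sub hsumA
      have htsum : ∑' i, r i = (G - DSCI.BB a ψ n j) - QQ' j := by
        rw [Summable.tsum_sub (hsummable.mul_left _) hsumA, tsum_mul_left, (hcol j hj1).tsum_eq, mul_one]
        congr 1
        exact tsum_eq_sum hAvanish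
      calc ENNReal.ofReal (G - DSCI.BB a ψ n j - QQ' j)
          = ENNReal.ofReal (∑' i, r i) := by rw [htsum]
        _ ≤ ∑' i, ENNReal.ofReal (r i) := DSCI.ofReal_tsum_le r hr
        _ ≤ ∑' i : ℕ, ENNReal.ofReal (π (i + 1) j * ψ (a ((i : ℤ) + 1) - a (-(j : ℤ)))) := by
            apply ENNReal.tsum_le_tsum
            intro i
            apply ENNReal.ofReal_le_ofReal
            have hcast : ((i : ℤ) + 1) = (((i+1 : ℕ)) : ℤ) := by push_cast; ring
            rw [hcast]
            have hpw := DSCI.pointwise ha hψ hψ0 hn (show 1 ≤ i + 1 by omega) hj1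
            have hri : r i = π (i+1) j * (G - DSCI.AA a ψ n (i+1) - DSCI.BB a ψ n j) := by
              rw [hrdef]; ring
            rw [hri]
            refine mul_le_mul_of_nonneg_left ?_ (hπ0 _ _)
            linarith
    calc ∑ j ∈ Finset.Icc 1 n, ENNReal.ofReal (ψ (DSCI.dd a j))
        = ENNReal.ofReal (∑ j ∈ Finset.Icc 1 n, ψ (DSCI.dd a j)) := hXofReal
      _ ≤ ENNReal.ofReal (∑ j ∈ Finset.Icc 1 n, (G - DSCI.BB a ψ n j - QQ' j)) :=
          ENNReal.ofReal_le_ofReal hreal2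
      _ ≤ ∑ j ∈ Finset.Icc 1 n, ENNReal.ofReal (G - DSCI.BB a ψ n j - QQ' j) :=
          DSCI.ofReal_sum_le _ _
      _ ≤ _ := Finset.sum_le_sum hcolterm
end

section
/- Let E = [a,T] be an excursion. Then for μ-almost every s ∈ E the set {t ∈ (s,T] : μ([s,t]) = ν([s,t])} is nonempty; in particular s ≤ τ_*(s) ≤ T for μ-almost every s ∈ E, i.e. τ_* maps μ-almost all of the excursion E into E. -/
open Set Filter MeasureTheory Topology
open scoped NNReal ENNReal


/-- Continuity of the CDF of an atomless finite measure on ℝ. -/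
lemma cont_cdf_aux (m : Measure ℝ) [IsFiniteMeasure m] [NullSingletonClass m] :
    Continuous (fun x => (m (Iic x)).toReal) := by
  rw [Metric.continuous_iff]
  intro x ε hε
  have h0 : Tendsto (fun δ ↦ m (Icc (x - δ) (x + δ))) (𝓝 0) (𝓝 0) :=
    tendsto_measure_Icc m x
  have hev : ∀ᶠ δ in 𝓝 (0:ℝ), m (Icc (x - δ) (x + δ)) < ENNReal.ofReal ε := by
    refine h0.eventually_lt_const ?_
    simpa using hε
  obtain ⟨δ, hδlt, hδpos⟩ := ((hev.filter_mono nhdsWithin_le_nhds).and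
    self_mem_nhdsWithin).exists (f := 𝓝[>] (0:ℝ))
  refine ⟨δ, hδpos, fun y hy => ?_⟩
  have hsplit : ∀ u v : ℝ, u ≤ v → (m (Iic v)).toReal - (m (Iic u)).toReal
      = (m (Ioc u v)).toReal := by
    intro u v huv
    have : m (Iic v) = m (Iic u) + m (Ioc u v) := by
      rw [← Iic_union_Ioc_eq_Iic huv, measure_union (Iic_disjoint_Ioc le_rfl) measurableSet_Ioc]
    rw [this, ENNReal.toReal_add (measure_ne_top _ _) (measure_ne_top _ _)]
    ring
  have key : ∀ u v : ℝ, u ≤ v → x - δ ≤ u → v ≤ x + δ →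
      (m (Iic v)).toReal - (m (Iic u)).toReal < ε := by
    intro u v huv h1 h2
    rw [hsplit u v huv]
    have hsub : m (Ioc u v) ≤ m (Icc (x - δ) (x + δ)) :=
      measure_mono (fun z hz => ⟨h1.trans hz.1.le, hz.2.trans h2⟩)
    have := hsub.trans_lt hδlt
    calc (m (Ioc u v)).toReal ≤ (m (Icc (x - δ) (x + δ))).toReal :=
          ENNReal.toReal_mono (measure_ne_top _ _) hsub
      _ < ε := by
          rw [← ENNReal.lt_ofReal_iff_toReal_lt (measure_ne_top _ _)]; exact hδlt
  rw [Real.dist_eq, abs_lt] at hy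
  rw [Real.dist_eq, abs_lt]
  have hm : ∀ u v : ℝ, u ≤ v → (m (Iic u)).toReal ≤ (m (Iic v)).toReal :=
    fun u v huv => ENNReal.toReal_mono (measure_ne_top _ _) (measure_mono (Iic_subset_Iic.2 huv))
  rcases le_total y x with h | h
  · constructor
    · have := key y x h (by linarith) (by linarith)
      linarith
    · have := hm y x h; linarith
  · constructor
    · have := hm x y h; linarith
    · have := key x y h (by linarith) (by linarith)
      linarith


/-- Per-component estimate: if every point of `S` dominates intervals to its right
up to `T`, then within an order-connected set `c` the `μ`-measure of `S ∩ c` is at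
most `ν c`. -/
lemma comp_bound (μ ν : Measure ℝ) [NullSingletonClass μ] [NullSingletonClass ν]
    (a T : ℝ) (S : Set ℝ) (hS : S ⊆ Ioo a T)
    (hB : ∀ s ∈ S, ∀ t, s < t → t ≤ T → μ (Icc s t) ≤ ν (Icc s t))
    (c : Set ℝ) (hc : c.OrdConnected) :
    μ (S ∩ c) ≤ ν c := by
  set D := S ∩ c with hD
  rcases D.eq_empty_or_nonempty with h | hne
  · rw [h]; simp
  have hbdd_below : BddBelow D := ⟨a, fun x hx => (hS hx.1).1.le⟩
  have hbdd_above : BddAbove D := ⟨T, fun x hx => (hS hx.1).2.le⟩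
  set p := sInf D
  set q := sSup D
  have hq_le_T : q ≤ T := csSup_le hne (fun x hx => (hS hx.1).2.le)
  have hDsub : D ⊆ Icc p q := fun x hx => ⟨csInf_le hbdd_below hx, le_csSup hbdd_above hx⟩
  have hIcc_Ioo_mu : μ (Icc p q) = μ (Ioo p q) := (measure_congr Ioo_ae_eq_Icc).symm
  have hIcc_Ioo_nu : ν (Icc p q) = ν (Ioo p q) := (measure_congr Ioo_ae_eq_Icc).symm
  have hIoo_sub_c : Ioo p q ⊆ c := by
    intro x hx
    obtain ⟨b1, hb1, hb1x⟩ := exists_lt_of_csInf_lt hne hx.1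
    obtain ⟨b2, hb2, hxb2⟩ := exists_lt_of_lt_csSup hne hx.2
    exact hc.out hb1.2 hb2.2 ⟨hb1x.le, hxb2.le⟩
  rcases lt_or_ge p q with hpq | hpq
  · -- main case
    set d := q - p with hd
    have hdpos : 0 < d := by simp [hd]; linarith
    have key : ∀ n : ℕ, μ (Icc (p + d / (n + 3)) (q - d / (n + 3))) ≤ ν (Icc p q) := by
      intro n
      have hden : (0:ℝ) < (n:ℝ) + 3 := by positivity
      have hfrac : 0 < d / ((n:ℝ) + 3) := by positivity
      set u := p + d / (n + 3)
      set v := q - d / (n + 3)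
      have huv : u < v := by
        have : d / ((n:ℝ) + 3) < d / 2 := by
          apply div_lt_div_of_pos_left hdpos (by norm_num)
          linarith
        simp only [u, v]
        linarith [this]
      obtain ⟨b, hbD, hbu⟩ := exists_lt_of_csInf_lt hne (show p < u by simp [u]; positivity)
      have hb_lt_v : b < v := hbu.trans huv
      have hv_le_T : v ≤ T := by
        have : v < q := by simp [v]; positivity
        linarith
      have h1 : μ (Icc u v) ≤ μ (Icc b v) := measure_mono (Icc_subset_Icc_left hbu.le)
      have h2 : μ (Icc b v) ≤ ν (Icc b v) := hB b hbD.1 v hb_lt_v hv_le_T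
      have h3 : ν (Icc b v) ≤ ν (Icc p q) := by
        apply measure_mono (Icc_subset_Icc (csInf_le hbdd_below hbD) ?_)
        have : v < q := by simp [v]; positivity
        exact this.le
      exact (h1.trans h2).trans h3
    have hmono : Monotone (fun n : ℕ => Icc (p + d / (n + 3)) (q - d / (n + 3))) := by
      intro n m hnm
      apply Icc_subset_Icc
      · have : d / ((m:ℝ) + 3) ≤ d / ((n:ℝ) + 3) := by
          apply div_le_div_of_nonneg_left hdpos.le (by positivity)
          exact_mod_cast by push_cast; linarith [(Nat.cast_le (α := ℝ)).2 hnm]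
        linarith
      · have : d / ((m:ℝ) + 3) ≤ d / ((n:ℝ) + 3) := by
          apply div_le_div_of_nonneg_left hdpos.le (by positivity)
          exact_mod_cast by push_cast; linarith [(Nat.cast_le (α := ℝ)).2 hnm]
        linarith
    have hunion : (⋃ n : ℕ, Icc (p + d / (n + 3)) (q - d / (n + 3))) = Ioo p q := by
      ext x
      simp only [mem_iUnion, mem_Icc, mem_Ioo]
      constructor
      · rintro ⟨n, h1, h2⟩
        have hfrac : 0 < d / ((n:ℝ) + 3) := by positivity
        constructor <;> linarith
      · rintro ⟨h1, h2⟩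
        set δ := min (x - p) (q - x) with hδ
        have hδpos : 0 < δ := by apply lt_min <;> linarith
        obtain ⟨n, hn⟩ := exists_nat_ge (d / δ)
        refine ⟨n, ?_, ?_⟩
        · have : d / ((n:ℝ) + 3) ≤ δ := by
            rw [div_le_iff₀ (by positivity)]
            calc d ≤ δ * (d / δ) := by rw [mul_div_cancel₀]; positivity
              _ ≤ δ * ((n:ℝ) + 3) := by
                  apply mul_le_mul_of_nonneg_left _ hδpos.le
                  linarith
          have : d / ((n:ℝ) + 3) ≤ x - p := this.trans (min_le_left _ _)
          linarith
        · have : d / ((n:ℝ) + 3) ≤ δ := by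
            rw [div_le_iff₀ (by positivity)]
            calc d ≤ δ * (d / δ) := by rw [mul_div_cancel₀]; positivity
              _ ≤ δ * ((n:ℝ) + 3) := by
                  apply mul_le_mul_of_nonneg_left _ hδpos.le
                  linarith
          have : d / ((n:ℝ) + 3) ≤ q - x := this.trans (min_le_right _ _)
          linarith
    calc μ (S ∩ c) ≤ μ (Icc p q) := measure_mono hDsub
      _ = μ (Ioo p q) := hIcc_Ioo_mu
      _ = ⨆ n : ℕ, μ (Icc (p + d / (n + 3)) (q - d / (n + 3))) := by
          rw [← hunion, hmono.directed_le.measure_iUnion]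
      _ ≤ ν (Icc p q) := iSup_le key
      _ = ν (Ioo p q) := hIcc_Ioo_nu
      _ ≤ ν c := measure_mono hIoo_sub_c
  · -- degenerate: q ≤ p
    have : μ (S ∩ c) ≤ μ (Icc p q) := measure_mono hDsub
    rw [hIcc_Ioo_mu, Ioo_eq_empty (by exact fun h => absurd hpq h.not_ge)] at this
    simp only [measure_empty, nonpos_iff_eq_zero] at this
    rw [this]
    exact zero_le



lemma bad_null (μ ν : Measure ℝ) [NullSingletonClass μ] [NullSingletonClass ν]
    [IsLocallyFiniteMeasure μ] [IsLocallyFiniteMeasure ν]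
    (hsing : μ.MutuallySingular ν) (a T : ℝ)
    (B : Set ℝ) (hBsub : B ⊆ Ioo a T)
    (hB : ∀ s ∈ B, ∀ t, s < t → t ≤ T → μ (Icc s t) ≤ ν (Icc s t)) :
    μ B = 0 := by
  obtain ⟨A, hAm, hμA, hνA⟩ := hsing
  have hsplitB : μ B ≤ μ (B ∩ A) + μ (B ∩ Aᶜ) := by
    conv_lhs => rw [← inter_union_compl B A]
    exact measure_union_le _ _
  have h1 : μ (B ∩ A) = 0 := measure_mono_null inter_subset_right hμA
  suffices h2 : μ (B ∩ Aᶜ) = 0 by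
    simp only [h1, h2, add_zero, zero_add, nonpos_iff_eq_zero] at hsplitB
    exact hsplitB
  set S := B ∩ Aᶜ with hSdef
  have hSsub : S ⊆ Ioo a T := fun x hx => hBsub hx.1
  have hSB : ∀ s ∈ S, ∀ t, s < t → t ≤ T → μ (Icc s t) ≤ ν (Icc s t) :=
    fun s hs => hB s hs.1
  have hνS : ν S = 0 := measure_mono_null inter_subset_right hνA
  refine le_antisymm ?_ (zero_le)
  have main : ∀ ε : ℝ≥0, 0 < ε → μ S ≤ ε := by
    intro ε hε
    obtain ⟨U, hSU, hUopen, hUε⟩ := Set.exists_isOpen_lt_of_lt S ε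
      (by rw [hνS]; exact_mod_cast hε)
    set 𝒞 : Set (Set ℝ) := (fun x => connectedComponentIn U x) '' S with h𝒞
    have hcomp_mem : ∀ c ∈ 𝒞, ∃ x ∈ U, c = connectedComponentIn U x := by
      rintro c ⟨x, hx, rfl⟩
      exact ⟨x, hSU hx, rfl⟩
    have hopen : ∀ c ∈ 𝒞, IsOpen c := by
      rintro c hc
      obtain ⟨x, hxU, rfl⟩ := hcomp_mem c hc
      exact hUopen.connectedComponentIn
    have hnonempty : ∀ c ∈ 𝒞, c.Nonempty := by
      rintro c hc
      obtain ⟨x, hxU, rfl⟩ := hcomp_mem c hc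
      exact ⟨x, mem_connectedComponentIn hxU⟩
    have hdisj : 𝒞.PairwiseDisjoint id := by
      rintro c ⟨x, hx, rfl⟩ d ⟨y, hy, rfl⟩ hcd
      rw [Function.onFun, id, id, disjoint_iff_inter_eq_empty]
      by_contra h
      obtain ⟨z, hz1, hz2⟩ := nonempty_iff_ne_empty.2 h
      exact hcd ((connectedComponentIn_eq hz1).trans (connectedComponentIn_eq hz2).symm)
    have hcount : 𝒞.Countable :=
      hdisj.countable_of_isOpen (fun c hc => hopen c hc) (fun c hc => hnonempty c hc)
    have hcover : S ⊆ ⋃ c ∈ 𝒞, S ∩ c := by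
      intro x hx
      exact mem_biUnion (mem_image_of_mem _ hx)
        ⟨hx, mem_connectedComponentIn (hSU hx)⟩
    calc μ S ≤ μ (⋃ c ∈ 𝒞, S ∩ c) := measure_mono hcover
      _ ≤ ∑' c : 𝒞, μ (S ∩ c) := measure_biUnion_le μ hcount _
      _ ≤ ∑' c : 𝒞, ν c := by
          refine ENNReal.tsum_le_tsum (fun c => ?_)
          refine comp_bound μ ν a T S hSsub hSB c ?_
          obtain ⟨x, hxU, hxeq⟩ := hcomp_mem c c.2
          rw [hxeq]
          exact isPreconnected_connectedComponentIn.ordConnected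
      _ = ν (⋃ c ∈ 𝒞, c) :=
          (measure_biUnion hcount hdisj (fun c hc => (hopen c hc).measurableSet)).symm
      _ ≤ ν U := by
          refine measure_mono ?_
          refine iUnion₂_subset (fun c hc => ?_)
          obtain ⟨x, hxU, rfl⟩ := hcomp_mem c hc
          exact connectedComponentIn_subset _ _
      _ ≤ ε := hUε.le
  refine ENNReal.le_of_forall_pos_le_add (fun ε hε _ => ?_)
  rw [zero_add]
  exact main ε hε


lemma split_Icc_aux (m : Measure ℝ) [NullSingletonClass m] {a s u : ℝ} (has : a ≤ s) (hsu : s ≤ u) :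
    m (Icc a u) = m (Icc a s) + m (Icc s u) := by
  rw [← Ico_union_Icc_eq_Icc has hsu,
    measure_union (by
      rw [Set.disjoint_left]
      exact fun z hz hz' => absurd hz'.1 (not_le.2 hz.2)) measurableSet_Icc,
    measure_congr Ico_ae_eq_Icc]

/-- on an excursion `E = [a,T]`, for `μ`-almost every `s ∈ E` the set
`{t ∈ (s,T] : μ([s,t]) = ν([s,t])}` is nonempty; in particular
`s ≤ τ_*(s) ≤ T` for `μ`-almost every `s ∈ E`, where
`τ_*(s) = inf{t > s : μ([s,t]) = ν([s,t])}`. -/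
theorem excursion_maps_into_itself
    (μ ν : Measure ℝ) [NullSingletonClass μ] [NullSingletonClass ν]
    [IsLocallyFiniteMeasure μ] [IsLocallyFiniteMeasure ν]
    (hsing : μ.MutuallySingular ν)
    (a T : ℝ) (haT : a < T)
    (hexc : ∀ x ∈ Set.Ioo a T, ν (Set.Icc a x) < μ (Set.Icc a x))
    (hend : μ (Set.Icc a T) = ν (Set.Icc a T)) :
    ∀ᵐ s ∂(μ.restrict (Set.Icc a T)),
      {t | t ∈ Set.Ioc s T ∧ μ (Set.Icc s t) = ν (Set.Icc s t)}.Nonempty ∧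
      s ≤ sInf {t | s < t ∧ μ (Set.Icc s t) = ν (Set.Icc s t)} ∧
      sInf {t | s < t ∧ μ (Set.Icc s t) = ν (Set.Icc s t)} ≤ T := by
  have hμfin : ∀ x y : ℝ, μ (Icc x y) ≠ ⊤ := fun x y => isCompact_Icc.measure_ne_top
  have hνfin : ∀ x y : ℝ, ν (Icc x y) ≠ ⊤ := fun x y => isCompact_Icc.measure_ne_top
  set μ' := μ.restrict (Icc a T) with hμ'
  set ν' := ν.restrict (Icc a T) with hν'
  haveI : IsFiniteMeasure μ' := ⟨by
    rw [hμ', Measure.restrict_apply_univ]; exact isCompact_Icc.measure_lt_top⟩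
  haveI : IsFiniteMeasure ν' := ⟨by
    rw [hν', Measure.restrict_apply_univ]; exact isCompact_Icc.measure_lt_top⟩
  set F : ℝ → ℝ := fun x => (μ' (Iic x)).toReal with hF
  set G : ℝ → ℝ := fun x => (ν' (Iic x)).toReal with hG
  have hFcont : Continuous F := cont_cdf_aux μ'
  have hGcont : Continuous G := cont_cdf_aux ν'
  have hres : ∀ x, a ≤ x → x ≤ T → μ' (Iic x) = μ (Icc a x) ∧ ν' (Iic x) = ν (Icc a x) := by
    intro x hax hxT
    have hset : Iic x ∩ Icc a T = Icc a x := by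
      ext z
      simp only [mem_inter_iff, mem_Iic, mem_Icc]
      constructor
      · rintro ⟨h1, h2, _⟩; exact ⟨h2, h1⟩
      · rintro ⟨h1, h2⟩; exact ⟨h2, h1, h2.trans hxT⟩
    constructor
    · rw [hμ', Measure.restrict_apply measurableSet_Iic, hset]
    · rw [hν', Measure.restrict_apply measurableSet_Iic, hset]
  have hFdiff : ∀ s u : ℝ, a ≤ s → s ≤ u → u ≤ T → (μ (Icc s u)).toReal = F u - F s := by
    intro s u has hsu huT
    have h1 : μ' (Iic u) = μ (Icc a u) := (hres u (has.trans hsu) huT).1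
    have h2 : μ' (Iic s) = μ (Icc a s) := (hres s has (hsu.trans huT)).1
    simp only [hF, h1, h2]
    rw [split_Icc_aux μ has hsu, ENNReal.toReal_add (hμfin _ _) (hμfin _ _)]
    ring
  have hGdiff : ∀ s u : ℝ, a ≤ s → s ≤ u → u ≤ T → (ν (Icc s u)).toReal = G u - G s := by
    intro s u has hsu huT
    have h1 : ν' (Iic u) = ν (Icc a u) := (hres u (has.trans hsu) huT).2
    have h2 : ν' (Iic s) = ν (Icc a s) := (hres s has (hsu.trans huT)).2
    simp only [hG, h1, h2]
    rw [split_Icc_aux ν has hsu, ENNReal.toReal_add (hνfin _ _) (hνfin _ _)]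
    ring
  set B : Set ℝ := {s | s ∈ Ioo a T ∧ ∀ t, s < t → t ≤ T → μ (Icc s t) ≤ ν (Icc s t)}
    with hBdef
  have hBnull : μ B = 0 :=
    bad_null μ ν hsing a T B (fun x hx => hx.1) (fun s hs => hs.2)
  have hres_B : μ' B = 0 :=
    le_antisymm (le_trans (Measure.restrict_apply_le _ _) hBnull.le) (zero_le)
  have h1 : ∀ᵐ s ∂μ', s ∈ Icc a T := ae_restrict_mem measurableSet_Icc
  have h2 : ∀ᵐ s ∂μ', s ∉ B := by
    rw [ae_iff]
    simpa only [not_not, setOf_mem_eq] using hres_B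
  have h3 : ∀ᵐ s ∂μ', s ≠ T := by
    filter_upwards [(Set.countable_singleton T).ae_notMem μ'] with x hx
    simpa using hx
  filter_upwards [h1, h2, h3] with s hs hsB hsT
  have hwit : ∃ u, u ∈ Ioc s T ∧ μ (Icc s u) = ν (Icc s u) := by
    rcases eq_or_lt_of_le hs.1 with rfl | has
    · exact ⟨T, ⟨haT, le_rfl⟩, hend⟩
    · have hsT' : s < T := lt_of_le_of_ne hs.2 hsT
      have hsIoo : s ∈ Ioo a T := ⟨has, hsT'⟩
      have hnB : ¬ (∀ t, s < t → t ≤ T → μ (Icc s t) ≤ ν (Icc s t)) :=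
        fun h => hsB ⟨hsIoo, h⟩
      push_neg at hnB
      obtain ⟨t, hst, htT, hlt⟩ := hnB
      have hfs_pos : 0 < F s - G s := by
        have hx := hexc s hsIoo
        have h1' := (hres s has.le hs.2).1
        have h2' := (hres s has.le hs.2).2
        simp only [hF, hG, h1', h2']
        have := (ENNReal.toReal_lt_toReal (hνfin a s) (hμfin a s)).2 hx
        linarith
      have hft : F s - G s < F t - G t := by
        have e1 : (μ (Icc s t)).toReal = F t - F s := hFdiff s t has.le hst.le htT
        have e2 : (ν (Icc s t)).toReal = G t - G s := hGdiff s t has.le hst.le htT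
        have := (ENNReal.toReal_lt_toReal (hνfin s t) (hμfin s t)).2 hlt
        linarith
      have hfT : F T - G T = 0 := by
        have h1' := (hres T haT.le le_rfl).1
        have h2' := (hres T haT.le le_rfl).2
        simp only [hF, hG, h1', h2', hend]
        ring
      have hcont : ContinuousOn (fun x => F x - G x) (Icc t T) :=
        (hFcont.sub hGcont).continuousOn
      have hmem : F s - G s ∈
          Icc ((fun x => F x - G x) T) ((fun x => F x - G x) t) := by
        constructor
        · simp only
          linarith
        · simp only
          linarith
      obtain ⟨u, huIcc, hu⟩ := intermediate_value_Icc' htT hcont hmem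
      refine ⟨u, ⟨hst.trans_le huIcc.1, huIcc.2⟩, ?_⟩
      have hsu : s ≤ u := (hst.trans_le huIcc.1).le
      have e1 : (μ (Icc s u)).toReal = F u - F s := hFdiff s u has.le hsu huIcc.2
      have e2 : (ν (Icc s u)).toReal = G u - G s := hGdiff s u has.le hsu huIcc.2
      have heq : (μ (Icc s u)).toReal = (ν (Icc s u)).toReal := by
        simp only at hu
        rw [e1, e2]; linarith
      exact (ENNReal.toReal_eq_toReal_iff' (hμfin _ _) (hνfin _ _)).1 heq
  obtain ⟨u, huIoc, hueq⟩ := hwit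
  refine ⟨⟨u, huIoc, hueq⟩, ?_, ?_⟩
  · exact le_csInf ⟨u, huIoc.1, hueq⟩ (fun b hb => hb.1.le)
  · refine le_trans (csInf_le ⟨s, fun b hb => hb.1.le⟩ ?_) huIoc.2
    exact ⟨huIoc.1, hueq⟩
end

section
/- For μ-almost every a ∈ (b₀, a₀], one has g_n(a) → a as n → ∞. -/
open Set Filter MeasureTheory

private lemma null_Sq (μ : Measure ℝ) [NullSingletonClass μ] (q : ℝ) :
    μ {x | q < x ∧ μ (Set.Ioc q x) = 0} = 0 := by
  set S := {x | q < x ∧ μ (Set.Ioc q x) = 0} with hS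
  have hdown : ∀ x ∈ S, ∀ y, q < y → y ≤ x → y ∈ S := by
    rintro x ⟨hqx, hx0⟩ y hqy hyx
    exact ⟨hqy, measure_mono_null (Set.Ioc_subset_Ioc_right hyx) hx0⟩
  have hcover : S ⊆ {x | x ∈ S ∧ ∀ y ∈ S, y ≤ x} ∪
      ⋃ (r : ℚ) (_ : (r : ℝ) ∈ S), Set.Ioc q (r : ℝ) := by
    intro y hy
    by_cases hmax : ∀ z ∈ S, z ≤ y
    · exact Or.inl ⟨hy, hmax⟩
    · push_neg at hmax
      obtain ⟨z, hz, hyz⟩ := hmax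
      obtain ⟨r, hr1, hr2⟩ := exists_rat_btwn hyz
      refine Or.inr (Set.mem_iUnion.2 ⟨r, Set.mem_iUnion.2
        ⟨hdown z hz r (lt_trans hy.1 hr1) hr2.le, ⟨hy.1, hr1.le⟩⟩⟩)
  refine measure_mono_null hcover (measure_union_null ?_ ?_)
  · refine Set.Subsingleton.measure_zero ?_ μ
    intro u hu v hv
    exact le_antisymm (hv.2 u hu.1) (hu.2 v hv.1)
  · refine measure_iUnion_null fun r => ?_
    by_cases h : (r : ℝ) ∈ S
    · simpa [h] using h.2
    · simp [h]

/-- Lemma 3.2 for `g_n`: with `E = [b₀,a₀]`, `M = μ(E) ∈ (0,∞)`,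
partition points `a₀ = a_{n,0} > a_{n,1} > ⋯ > a_{n,n} = b₀` with
`μ((a_{n,i}, a_{n,i−1}]) = M/n`, and `g_n(x) = a_{n,i}` for `x ∈ (a_{n,i}, a_{n,i−1}]`,
one has `g_n(x) → x` for `μ`-almost every `x ∈ (b₀, a₀]`. -/
theorem gn_tendsto_ae
    (μ : Measure ℝ) [NullSingletonClass μ]
    (b₀ a₀ : ℝ) (hba : b₀ < a₀)
    (hM0 : 0 < μ (Set.Icc b₀ a₀)) (hMfin : μ (Set.Icc b₀ a₀) < ⊤)
    (a : ℕ → ℕ → ℝ)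
    (ha0 : ∀ n, 1 ≤ n → a n 0 = a₀)
    (han : ∀ n, 1 ≤ n → a n n = b₀)
    (hanti : ∀ n, 1 ≤ n → StrictAntiOn (a n) (Set.Iic n))
    (hμeq : ∀ n, 1 ≤ n → ∀ i, 1 ≤ i → i ≤ n →
      μ (Set.Ioc (a n i) (a n (i - 1))) = μ (Set.Icc b₀ a₀) / n)
    (g : ℕ → ℝ → ℝ)
    (hg : ∀ n, 1 ≤ n → ∀ i, 1 ≤ i → i ≤ n →
      ∀ x ∈ Set.Ioc (a n i) (a n (i - 1)), g n x = a n i) :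
    ∀ᵐ x ∂(μ.restrict (Set.Ioc b₀ a₀)),
      Tendsto (fun n => g n x) atTop (nhds x) := by
  classical
  set M := μ (Set.Icc b₀ a₀) with hMdef
  -- pointwise bound
  have hbound : ∀ x ∈ Set.Ioc b₀ a₀, ∀ n, 1 ≤ n →
      g n x < x ∧ μ (Set.Ioc (g n x) x) ≤ M / n := by
    intro x hx n hn
    have hPn : a n n < x := by rw [han n hn]; exact hx.1
    have hex : ∃ i, a n i < x := ⟨n, hPn⟩
    set i := Nat.find hex with hi
    have hiP : a n i < x := Nat.find_spec hex
    have hin : i ≤ n := Nat.find_min' hex hPn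
    have hi1 : 1 ≤ i := by
      rcases Nat.eq_zero_or_pos i with h0 | h1
      · exfalso
        have h2 := hiP
        rw [h0, ha0 n hn] at h2
        exact absurd hx.2 (not_le.mpr h2)
      · exact h1
    have hi' : ¬ a n (i - 1) < x := Nat.find_min hex (Nat.sub_lt hi1 one_pos)
    have hxmem : x ∈ Set.Ioc (a n i) (a n (i - 1)) := ⟨hiP, not_lt.mp hi'⟩
    have hgx : g n x = a n i := hg n hn i hi1 hin x hxmem
    refine ⟨by rw [hgx]; exact hiP, ?_⟩
    rw [hgx]
    calc μ (Set.Ioc (a n i) x) ≤ μ (Set.Ioc (a n i) (a n (i - 1))) :=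
          measure_mono (Set.Ioc_subset_Ioc_right hxmem.2)
      _ = M / n := hμeq n hn i hi1 hin
  have hMn : Tendsto (fun n : ℕ => M / (n : ENNReal)) atTop (nhds 0) := by
    have h := ENNReal.Tendsto.const_mul (a := M) ENNReal.tendsto_inv_nat_nhds_zero
      (Or.inr hMfin.ne)
    simpa [div_eq_mul_inv] using h
  have key : ∀ x ∈ Set.Ioc b₀ a₀,
      (∀ q : ℚ, (q : ℝ) < x → μ (Set.Ioc (q : ℝ) x) ≠ 0) →
      Tendsto (fun n => g n x) atTop (nhds x) := by
    intro x hx hq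
    rw [Metric.tendsto_atTop]
    intro ε hε
    obtain ⟨q, hq1, hq2⟩ := exists_rat_btwn (show x - ε < x by linarith)
    have hc : 0 < μ (Set.Ioc (q : ℝ) x) := pos_iff_ne_zero.mpr (hq q hq2)
    have hev : ∀ᶠ n : ℕ in atTop, M / (n : ENNReal) < μ (Set.Ioc (q : ℝ) x) :=
      hMn.eventually_lt_const hc
    rw [eventually_atTop] at hev
    obtain ⟨N, hN⟩ := hev
    refine ⟨max N 1, fun n hn => ?_⟩
    have hn1 : 1 ≤ n := le_trans (le_max_right N 1) hn
    obtain ⟨hlt, hle⟩ := hbound x hx n hn1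
    have hqg : (q : ℝ) < g n x := by
      by_contra hle'
      push_neg at hle'
      have : μ (Set.Ioc (q : ℝ) x) ≤ M / n :=
        le_trans (measure_mono (Set.Ioc_subset_Ioc_left hle')) hle
      exact absurd this (not_le.mpr (hN n (le_trans (le_max_left N 1) hn)))
    rw [Real.dist_eq, abs_lt]
    constructor <;> linarith
  have hnull : μ (⋃ q : ℚ, {x | (q : ℝ) < x ∧ μ (Set.Ioc (q : ℝ) x) = 0}) = 0 :=
    measure_iUnion_null fun q => null_Sq μ (q : ℝ)
  rw [ae_restrict_iff' measurableSet_Ioc]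
  filter_upwards [compl_mem_ae_iff.mpr hnull] with x hxc hxmem
  refine key x hxmem fun q hqx h0 => ?_
  exact hxc (Set.mem_iUnion.2 ⟨q, hqx, h0⟩)
end

section
/- Let θ be a forward-looking transport kernel balancing μ and ν, and let ψ : [0,∞) → [0,∞) be concave with ψ(0) = 0 and ψ continuous at 0. Then lim_{n→∞} ∫_E ∫_{[s,∞)} ψ(h_n(t) − g_n(s)) θ_s(dt) μ(ds) = ∫_E ∫_{[s,∞)} ψ(t − s) θ_s(dt) μ(ds), as a limit in [0,∞]. -/
open Set Filter MeasureTheory ProbabilityTheory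

open scoped ENNReal NNReal

lemma psi_mono {ψ : ℝ → ℝ} (hψ : ConcaveOn ℝ (Set.Ici 0) ψ)
    (hψ0 : ∀ x ∈ Set.Ici (0:ℝ), 0 ≤ ψ x) : MonotoneOn ψ (Set.Ici 0) := by
  intro x hx y hy hxy
  rcases eq_or_lt_of_le hxy with rfl | hxy
  · exact le_rfl
  by_contra hlt
  push_neg at hlt
  have hx0 : (0:ℝ) ≤ x := hx
  have key : ∀ z, y < z → (z - y) * ψ x ≤ (z - x) * ψ y := by
    intro z hz
    have hzx : x < z := lt_trans hxy hz
    have h1 : 0 < z - x := by linarith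
    have hcomb := hψ.2 (mem_Ici.2 hx0) (mem_Ici.2 (le_trans hx0 (le_of_lt hzx)))
      (show (0:ℝ) ≤ (z - y) / (z - x) from div_nonneg (by linarith) h1.le)
      (show (0:ℝ) ≤ (y - x) / (z - x) from div_nonneg (by linarith) h1.le)
      (show (z - y) / (z - x) + (y - x) / (z - x) = 1 by field_simp; ring)
    have harg : (z - y) / (z - x) * x + (y - x) / (z - x) * z = y := by
      field_simp; ring
    simp only [smul_eq_mul] at hcomb
    rw [harg] at hcomb
    have hz0 : 0 ≤ ψ z := hψ0 z (le_trans hx0 (le_of_lt hzx))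
    have h2 : (z - y) / (z - x) * ψ x ≤ ψ y := by
      nlinarith [mul_nonneg (div_nonneg (by linarith : (0:ℝ) ≤ y - x) h1.le) hz0]
    calc (z - y) * ψ x = ((z - y) / (z - x) * ψ x) * (z - x) := by field_simp
      _ ≤ ψ y * (z - x) := mul_le_mul_of_nonneg_right h2 h1.le
      _ = (z - x) * ψ y := mul_comm _ _
  have hψx : 0 < ψ x := lt_of_le_of_lt (hψ0 y hy) hlt
  set z := max (y + 1) ((y * ψ x - x * ψ y) / (ψ x - ψ y) + 1) with hz
  have hzy : y < z := lt_of_lt_of_le (by linarith) (le_max_left _ _)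
  have hzbig : (y * ψ x - x * ψ y) / (ψ x - ψ y) < z :=
    lt_of_lt_of_le (by linarith) (le_max_right _ _)
  have hd : 0 < ψ x - ψ y := by linarith
  have : y * ψ x - x * ψ y < z * (ψ x - ψ y) := by
    rw [div_lt_iff₀ hd] at hzbig; linarith
  have := key z hzy
  nlinarith

lemma psi_subadd {ψ : ℝ → ℝ} (hψ : ConcaveOn ℝ (Set.Ici 0) ψ)
    (hψzero : ψ 0 = 0) {x y : ℝ} (hx : 0 ≤ x) (hy : 0 ≤ y) :
    ψ (x + y) ≤ ψ x + ψ y := by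
  rcases eq_or_lt_of_le (by linarith : (0:ℝ) ≤ x + y) with h0 | hpos
  · have hx0 : x = 0 := by linarith
    have hy0 : y = 0 := by linarith
    simp [hx0, hy0, hψzero]
  have hxle : ψ x ≥ x / (x + y) * ψ (x + y) := by
    have hcomb := hψ.2 (mem_Ici.2 (by linarith : (0:ℝ) ≤ x + y)) (mem_Ici.2 le_rfl)
      (show (0:ℝ) ≤ x / (x + y) by positivity)
      (show (0:ℝ) ≤ y / (x + y) by positivity)
      (show x / (x + y) + y / (x + y) = 1 by field_simp)
    have harg : x / (x + y) * (x + y) + y / (x + y) * 0 = x := by field_simp; ring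
    simp only [smul_eq_mul] at hcomb
    rw [harg, hψzero, mul_zero, add_zero] at hcomb
    exact hcomb
  have hyle : ψ y ≥ y / (x + y) * ψ (x + y) := by
    have hcomb := hψ.2 (mem_Ici.2 (by linarith : (0:ℝ) ≤ x + y)) (mem_Ici.2 le_rfl)
      (show (0:ℝ) ≤ y / (x + y) by positivity)
      (show (0:ℝ) ≤ x / (x + y) by positivity)
      (show y / (x + y) + x / (x + y) = 1 by field_simp; ring)
    have harg : y / (x + y) * (x + y) + x / (x + y) * 0 = y := by field_simp; ring
    simp only [smul_eq_mul] at hcomb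
    rw [harg, hψzero, mul_zero, add_zero] at hcomb
    exact hcomb
  have : x / (x + y) * ψ (x + y) + y / (x + y) * ψ (x + y) = ψ (x + y) := by
    field_simp
  linarith

/-- splitting a lintegral over a chain of `Ioc`s. -/
lemma lint_Ioc_sum {m : Measure ℝ} (f : ℝ → ℝ≥0∞) (u : ℕ → ℝ) (hu : Monotone u)
    (n : ℕ) (bound : ℕ → ℝ≥0∞)
    (hb : ∀ k < n, ∫⁻ x in Set.Ioc (u k) (u (k+1)), f x ∂m ≤ bound k) :
    ∫⁻ x in Set.Ioc (u 0) (u n), f x ∂m ≤ ∑ k ∈ Finset.range n, bound k := by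
  induction n with
  | zero => simp
  | succ n ih =>
    have hsplit : Set.Ioc (u 0) (u (n+1)) = Set.Ioc (u 0) (u n) ∪ Set.Ioc (u n) (u (n+1)) :=
      (Set.Ioc_union_Ioc_eq_Ioc (hu (Nat.zero_le n)) (hu (Nat.le_succ n))).symm
    rw [hsplit, Measure.restrict_union (Set.Ioc_disjoint_Ioc_of_le le_rfl) measurableSet_Ioc,
      lintegral_add_measure, Finset.sum_range_succ]
    exact add_le_add (ih fun k hk => hb k (Nat.lt_succ_of_lt hk)) (hb n (Nat.lt_succ_self n))

/-- Jensen-type bound for the discretisation sums. -/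
lemma jensen_sum_bound {ψ : ℝ → ℝ} (hψ : ConcaveOn ℝ (Set.Ici 0) ψ)
    (hψ0 : ∀ x ∈ Set.Ici (0:ℝ), 0 ≤ ψ x)
    (n : ℕ) (hn : 1 ≤ n) (l : ℕ → ℝ) (hl : ∀ i, 0 ≤ l i)
    (c : ℝ) (hc : ψ ((∑ i ∈ Finset.range n, l i) / n) ≤ c) (M : ℝ≥0∞) :
    ∑ i ∈ Finset.range n, ENNReal.ofReal (ψ (l i)) * (M / n) ≤ ENNReal.ofReal c * M := by
  have hn0 : (0:ℝ) < n := by exact_mod_cast hn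
  have hjensen : ∑ i ∈ Finset.range n, (n:ℝ)⁻¹ • ψ (l i) ≤
      ψ (∑ i ∈ Finset.range n, (n:ℝ)⁻¹ • l i) := by
    apply hψ.le_map_sum
    · intro i _; positivity
    · simp [Finset.sum_const, Finset.card_range]
      field_simp
    · intro i _; exact mem_Ici.2 (hl i)
  have havg : ∑ i ∈ Finset.range n, (n:ℝ)⁻¹ • l i = (∑ i ∈ Finset.range n, l i) / n := by
    rw [← Finset.smul_sum]; simp [smul_eq_mul, div_eq_inv_mul]
  rw [havg] at hjensen
  have hsum : ∑ i ∈ Finset.range n, ψ (l i) ≤ n * c := by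
    have h1 : ∑ i ∈ Finset.range n, (n:ℝ)⁻¹ • ψ (l i)
        = (n:ℝ)⁻¹ * ∑ i ∈ Finset.range n, ψ (l i) := by
      rw [← Finset.smul_sum]; simp [smul_eq_mul]
    rw [h1] at hjensen
    have := le_trans hjensen hc
    calc ∑ i ∈ Finset.range n, ψ (l i)
        = n * ((n:ℝ)⁻¹ * ∑ i ∈ Finset.range n, ψ (l i)) := by field_simp
      _ ≤ n * c := mul_le_mul_of_nonneg_left this hn0.le
  calc ∑ i ∈ Finset.range n, ENNReal.ofReal (ψ (l i)) * (M / n)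
      = (∑ i ∈ Finset.range n, ENNReal.ofReal (ψ (l i))) * (M / n) := by
        rw [Finset.sum_mul]
    _ = ENNReal.ofReal (∑ i ∈ Finset.range n, ψ (l i)) * (M / n) := by
        rw [ENNReal.ofReal_sum_of_nonneg fun i _ => hψ0 _ (mem_Ici.2 (hl i))]
    _ ≤ ENNReal.ofReal ((n:ℝ) * c) * (M / n) :=
        mul_le_mul_left (ENNReal.ofReal_le_ofReal hsum) _
    _ = (n : ℝ≥0∞) * ENNReal.ofReal c * (M / n) := by
        rw [ENNReal.ofReal_mul hn0.le, ENNReal.ofReal_natCast]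
    _ = ENNReal.ofReal c * ((n : ℝ≥0∞) * (M / n)) := by ring
    _ = ENNReal.ofReal c * M := by
        rw [ENNReal.mul_div_cancel (by exact_mod_cast (Nat.pos_of_ne_zero (by omega)).ne' : (n:ℝ≥0∞) ≠ 0)
          (by simp : (n:ℝ≥0∞) ≠ ⊤)]

/-- convergence of the discretised cost: with the discretisation
`g_n`, `h_n` of the excursion `E = [b₀, a₀]`, a forward-looking transport kernel `θ`
balancing `μ` and `ν`, and `ψ : [0,∞) → [0,∞)` concave with `ψ(0) = 0` and
continuous at `0`, one has (as a limit in `[0,∞]`)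
`lim_n ∫_E ∫_{[s,∞)} ψ(h_n(t) − g_n(s)) θ_s(dt) μ(ds)
  = ∫_E ∫_{[s,∞)} ψ(t − s) θ_s(dt) μ(ds)`. -/
theorem discretised_cost_tendsto
    (μ ν : Measure ℝ) [NullSingletonClass μ] [NullSingletonClass ν]
    [IsLocallyFiniteMeasure μ] [IsLocallyFiniteMeasure ν]
    (hsing : μ.MutuallySingular ν)
    (b₀ a₀ : ℝ) (hba : b₀ < a₀)
    (hexc : ∀ x ∈ Set.Ioo b₀ a₀, ν (Set.Icc b₀ x) < μ (Set.Icc b₀ x))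
    (hend : μ (Set.Icc b₀ a₀) = ν (Set.Icc b₀ a₀))
    (hM0 : 0 < μ (Set.Icc b₀ a₀)) (hMfin : μ (Set.Icc b₀ a₀) < ⊤)
    (a b : ℕ → ℕ → ℝ)
    (ha0 : ∀ n, 1 ≤ n → a n 0 = a₀) (han : ∀ n, 1 ≤ n → a n n = b₀)
    (hb0 : ∀ n, 1 ≤ n → b n 0 = b₀) (hbn : ∀ n, 1 ≤ n → b n n = a₀)
    (haanti : ∀ n, 1 ≤ n → StrictAnti (a n))
    (hbmono : ∀ n, 1 ≤ n → StrictMono (b n))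
    (hatend : ∀ n, 1 ≤ n → Tendsto (a n) atTop atBot)
    (hbtend : ∀ n, 1 ≤ n → Tendsto (b n) atTop atTop)
    (hdisj : ∀ n, 1 ≤ n → Disjoint ((a n) '' Set.Ici 1) ((b n) '' Set.Ici 1))
    (hμeq : ∀ n, 1 ≤ n → ∀ i, 1 ≤ i → i ≤ n →
      μ (Set.Ioc (a n i) (a n (i - 1))) = μ (Set.Icc b₀ a₀) / n)
    (hνeq : ∀ n, 1 ≤ n → ∀ j, 1 ≤ j → j ≤ n →
      ν (Set.Ioc (b n (j - 1)) (b n j)) = μ (Set.Icc b₀ a₀) / n)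
    (hmesha : ∀ ε > (0:ℝ), ∃ N, ∀ n ≥ N, 1 ≤ n → ∀ i ≥ n, a n i - a n (i + 1) < ε)
    (hmeshb : ∀ ε > (0:ℝ), ∃ N, ∀ n ≥ N, 1 ≤ n → ∀ i ≥ n, b n (i + 1) - b n i < ε)
    (g h : ℕ → ℝ → ℝ)
    (hg : ∀ n, 1 ≤ n → ∀ i, 1 ≤ i →
      ∀ x ∈ Set.Ioc (a n i) (a n (i - 1)), g n x = a n i)
    (hh : ∀ n, 1 ≤ n → ∀ j, 1 ≤ j →
      ∀ x ∈ Set.Ioc (b n (j - 1)) (b n j), h n x = b n j)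
    (hh0 : ∀ n, 1 ≤ n → ∀ x ≤ b₀, h n x = b₀)
    (θ : Kernel ℝ ℝ) [IsMarkovKernel θ]
    (hfwd : ∀ s : ℝ, θ s (Set.Iio s) = 0)
    (hbal : ∀ C : Set ℝ, MeasurableSet C → ∫⁻ s, θ s C ∂μ = ν C)
    (ψ : ℝ → ℝ) (hψ : ConcaveOn ℝ (Set.Ici 0) ψ)
    (hψ0 : ∀ x ∈ Set.Ici (0:ℝ), 0 ≤ ψ x)
    (hψzero : ψ 0 = 0)
    (hψcont : ContinuousWithinAt ψ (Set.Ici 0) 0) :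
    Tendsto
      (fun n => ∫⁻ s in Set.Icc b₀ a₀,
        ∫⁻ t in Set.Ici s, ENNReal.ofReal (ψ (h n t - g n s)) ∂(θ s) ∂μ)
      atTop
      (nhds (∫⁻ s in Set.Icc b₀ a₀,
        ∫⁻ t in Set.Ici s, ENNReal.ofReal (ψ (t - s)) ∂(θ s) ∂μ)) := by
  classical
  set M := μ (Set.Icc b₀ a₀) with hMdef
  set φ : ℝ → ℝ := fun x => ψ (max x 0) with hφdef
  have hmono : MonotoneOn ψ (Set.Ici 0) := psi_mono hψ hψ0
  have hφmono : Monotone φ := fun x y hxy =>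
    hmono (mem_Ici.2 (le_max_right _ _)) (mem_Ici.2 (le_max_right _ _))
      (max_le_max hxy le_rfl)
  have hφmeas : Measurable φ := hφmono.measurable
  have hφeq : ∀ x : ℝ, 0 ≤ x → φ x = ψ x := fun x hx => by
    simp only [hφdef, max_eq_left hx]
  have hφ0 : ∀ x, 0 ≤ φ x := fun x => hψ0 _ (mem_Ici.2 (le_max_right _ _))
  -- index of s in the a-grid
  have hidxa : ∀ n, 1 ≤ n → ∀ s, s ≤ a₀ → ∃ i, 1 ≤ i ∧ a n i < s ∧ s ≤ a n (i-1) := by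
    intro n hn s hs
    have hex : ∃ i, a n i < s := ((hatend n hn).eventually (eventually_lt_atBot s)).exists
    refine ⟨Nat.find hex, ?_, Nat.find_spec hex, ?_⟩
    · by_contra h0
      push_neg at h0
      interval_cases i : Nat.find hex
      · have := Nat.find_spec hex
        rw [show Nat.find hex = 0 by omega] at this
        rw [ha0 n hn] at this; linarith
    · have h1 : 1 ≤ Nat.find hex := by
        rcases Nat.eq_zero_or_pos (Nat.find hex) with h0 | h0
        · exfalso
          have := Nat.find_spec hex
          rw [h0, ha0 n hn] at this; linarith
        · exact h0
      have := Nat.find_min hex (show Nat.find hex - 1 < Nat.find hex by omega)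
      exact not_lt.1 this
  -- index of t in the b-grid
  have hidxb : ∀ n, 1 ≤ n → ∀ t, b₀ < t → ∃ j, 1 ≤ j ∧ b n (j-1) < t ∧ t ≤ b n j ∧
      h n t = b n j := by
    intro n hn t ht
    have hex : ∃ j, t ≤ b n j := ((hbtend n hn).eventually (eventually_ge_atTop t)).exists
    have h1 : 1 ≤ Nat.find hex := by
      rcases Nat.eq_zero_or_pos (Nat.find hex) with h0 | h0
      · exfalso
        have := Nat.find_spec hex
        rw [h0, hb0 n hn] at this; linarith
      · exact h0
    have hlt : b n (Nat.find hex - 1) < t := by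
      have := Nat.find_min hex (show Nat.find hex - 1 < Nat.find hex by omega)
      exact not_le.1 this
    exact ⟨Nat.find hex, h1, hlt, Nat.find_spec hex,
      hh n hn _ h1 t ⟨hlt, Nat.find_spec hex⟩⟩
  -- g is below s on (-∞, a₀]
  have hgle : ∀ n, 1 ≤ n → ∀ s, s ≤ a₀ → g n s ≤ s := by
    intro n hn s hs
    obtain ⟨i, hi1, hlt, hle⟩ := hidxa n hn s hs
    rw [hg n hn i hi1 s ⟨hlt, hle⟩]
    exact hlt.le
  -- h is above t everywhere
  have hhge : ∀ n, 1 ≤ n → ∀ t : ℝ, t ≤ h n t := by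
    intro n hn t
    rcases le_or_gt t b₀ with ht | ht
    · rw [hh0 n hn t ht]; exact ht
    · obtain ⟨j, _, _, hle, heq⟩ := hidxb n hn t ht
      rw [heq]; exact hle
  -- h n is monotone
  have hhmono : ∀ n, 1 ≤ n → Monotone (h n) := by
    intro n hn t₁ t₂ ht
    rcases le_or_gt t₂ b₀ with h2 | h2
    · rw [hh0 n hn t₁ (le_trans ht h2), hh0 n hn t₂ h2]
    rcases le_or_gt t₁ b₀ with h1 | h1
    · obtain ⟨j₂, hj₂, _, _, heq₂⟩ := hidxb n hn t₂ h2
      rw [hh0 n hn t₁ h1, heq₂, ← hb0 n hn]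
      exact ((hbmono n hn).monotone (Nat.zero_le j₂))
    · obtain ⟨j₁, hj₁, hlt₁, hle₁, heq₁⟩ := hidxb n hn t₁ h1
      obtain ⟨j₂, hj₂, hlt₂, hle₂, heq₂⟩ := hidxb n hn t₂ h2
      rw [heq₁, heq₂]
      have : b n (j₁ - 1) < b n j₂ := lt_of_lt_of_le hlt₁ (le_trans ht hle₂)
      have hjj : j₁ - 1 < j₂ := (hbmono n hn).lt_iff_lt.1 this
      exact (hbmono n hn).monotone (by omega)
  have hhmeas : ∀ n, 1 ≤ n → Measurable (h n) := fun n hn => (hhmono n hn).measurable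
  -- the truncated g
  have hgtle : ∀ n, 1 ≤ n → ∀ s : ℝ, g n (min s a₀) ≤ s := fun n hn s =>
    le_trans (hgle n hn _ (min_le_right s a₀)) (min_le_left s a₀)
  have hgtmono : ∀ n, 1 ≤ n → Monotone (fun s => g n (min s a₀)) := by
    intro n hn s₁ s₂ hs
    obtain ⟨i₁, hi₁, hlt₁, hle₁⟩ := hidxa n hn (min s₁ a₀) (min_le_right _ _)
    obtain ⟨i₂, hi₂, hlt₂, hle₂⟩ := hidxa n hn (min s₂ a₀) (min_le_right _ _)
    simp only
    rw [hg n hn i₁ hi₁ _ ⟨hlt₁, hle₁⟩, hg n hn i₂ hi₂ _ ⟨hlt₂, hle₂⟩]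
    by_contra hcon
    push_neg at hcon
    have hii : i₁ < i₂ := (haanti n hn).lt_iff_gt.1 hcon
    have h12 : i₁ ≤ i₂ - 1 := by omega
    have : a n (i₂ - 1) ≤ a n i₁ := (haanti n hn).antitone h12
    have hmm : min s₁ a₀ ≤ min s₂ a₀ := min_le_min hs le_rfl
    linarith
  have hgtmeas : ∀ n, 1 ≤ n → Measurable (fun s => g n (min s a₀)) :=
    fun n hn => (hgtmono n hn).measurable
  -- θ s (Ici s) = 1
  have hθIci : ∀ s : ℝ, θ s (Set.Ici s) = 1 := by
    intro s
    refine le_antisymm prob_le_one ?_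
    have h1 : (1:ℝ≥0∞) = θ s (Set.Iio s ∪ Set.Ici s) := by
      rw [Iio_union_Ici]; exact (measure_univ).symm
    calc (1:ℝ≥0∞) = θ s (Set.Iio s ∪ Set.Ici s) := h1
      _ ≤ θ s (Set.Iio s) + θ s (Set.Ici s) := measure_union_le _ _
      _ = θ s (Set.Ici s) := by rw [hfwd s, zero_add]
  -- ν is the image of μ under the kernel
  have hνbind : ν = Measure.bind μ (fun s => θ s) := by
    ext C hC
    rw [Measure.bind_apply hC θ.measurable.aemeasurable]
    exact (hbal C hC).symm
  -- abbreviations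
  set I₁ : ℝ → ℝ≥0∞ := fun s => ∫⁻ t in Set.Ici s, ENNReal.ofReal (φ (t - s)) ∂(θ s)
    with hI₁def
  set J : ℕ → ℝ → ℝ≥0∞ := fun n s =>
    ∫⁻ t in Set.Ici s, ENNReal.ofReal (φ (h n t - g n (min s a₀))) ∂(θ s) with hJdef
  set Gf : ℕ → ℝ → ℝ≥0∞ := fun n t => ENNReal.ofReal (φ (h n t - t)) with hGfdef
  set I₃ : ℕ → ℝ → ℝ≥0∞ := fun n s => ∫⁻ t in Set.Ici s, Gf n t ∂(θ s) with hI₃def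
  set D : ℕ → ℝ → ℝ≥0∞ := fun n s =>
    ENNReal.ofReal (φ (min s a₀ - g n (min s a₀))) with hDdef
  set L : ℝ≥0∞ := ∫⁻ s in Set.Icc b₀ a₀,
      ∫⁻ t in Set.Ici s, ENNReal.ofReal (ψ (t - s)) ∂(θ s) ∂μ with hLdef
  set F : ℕ → ℝ≥0∞ := fun n => ∫⁻ s in Set.Icc b₀ a₀,
      ∫⁻ t in Set.Ici s, ENNReal.ofReal (ψ (h n t - g n s)) ∂(θ s) ∂μ with hFdef
  -- rewriting L with φ
  have hLrw : L = ∫⁻ s in Set.Icc b₀ a₀, I₁ s ∂μ := by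
    refine lintegral_congr fun s => lintegral_congr_ae ?_
    filter_upwards [ae_restrict_mem measurableSet_Ici] with t ht
    rw [hφeq _ (sub_nonneg.2 ht)]
  -- rewriting F n with φ
  have hFrw : ∀ n, 1 ≤ n → F n = ∫⁻ s in Set.Icc b₀ a₀, J n s ∂μ := by
    intro n hn
    refine lintegral_congr_ae ?_
    filter_upwards [ae_restrict_mem measurableSet_Icc] with s hs
    refine lintegral_congr_ae ?_
    filter_upwards [ae_restrict_mem measurableSet_Ici] with t ht
    have hsa : min s a₀ = s := min_eq_left hs.2
    have hts : s ≤ t := ht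
    rw [hsa, hφeq _ (by
      have h1 := hgle n hn s hs.2
      have h2 := hhge n hn t
      linarith)]
  -- lower bound
  have hlow : ∀ n, 1 ≤ n → L ≤ F n := by
    intro n hn
    rw [hLrw, hFrw n hn]
    refine lintegral_mono fun s => lintegral_mono fun t => ENNReal.ofReal_le_ofReal ?_
    have h1 : t ≤ h n t := hhge n hn t
    have h2 : g n (min s a₀) ≤ s := hgtle n hn s
    exact hmono (mem_Ici.2 (le_max_right _ _)) (mem_Ici.2 (le_max_right _ _))
      (max_le_max (by linarith) le_rfl)
  -- measurability of I₁
  have hI₁meas : Measurable I₁ := by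
    have heq : I₁ = fun s => ∫⁻ t, (fun p : ℝ × ℝ =>
        ENNReal.ofReal (φ (p.2 - p.1)) * Set.indicator {q : ℝ × ℝ | q.1 ≤ q.2} 1 p) (s, t)
          ∂(θ s) := by
      funext s
      simp only [hI₁def]
      rw [← lintegral_indicator measurableSet_Ici]
      refine lintegral_congr fun t => ?_
      by_cases hst : s ≤ t
      · simp [Set.indicator_of_mem, hst, Set.indicator_of_mem (show t ∈ Set.Ici s from hst)]
      · simp [Set.indicator_of_notMem, hst,
          Set.indicator_of_notMem (show t ∉ Set.Ici s from hst)]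
    rw [heq]
    exact Measurable.lintegral_kernel_prod_right'
      (((hφmeas.comp (measurable_snd.sub measurable_fst)).ennreal_ofReal).mul
        (measurable_one.indicator (measurableSet_le measurable_fst measurable_snd)))
  -- measurability of I₃
  have hI₃meas : ∀ n, 1 ≤ n → Measurable (I₃ n) := by
    intro n hn
    have heq : I₃ n = fun s => ∫⁻ t, (fun p : ℝ × ℝ =>
        Gf n p.2 * Set.indicator {q : ℝ × ℝ | q.1 ≤ q.2} 1 p) (s, t) ∂(θ s) := by
      funext s
      simp only [hI₃def]
      rw [← lintegral_indicator measurableSet_Ici]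
      refine lintegral_congr fun t => ?_
      by_cases hst : s ≤ t
      · simp [Set.indicator_of_mem, hst, Set.indicator_of_mem (show t ∈ Set.Ici s from hst)]
      · simp [Set.indicator_of_notMem, hst,
          Set.indicator_of_notMem (show t ∉ Set.Ici s from hst)]
    rw [heq]
    exact Measurable.lintegral_kernel_prod_right'
      ((((hφmeas.comp ((hhmeas n hn).sub measurable_id)).ennreal_ofReal).comp
        measurable_snd).mul
        (measurable_one.indicator (measurableSet_le measurable_fst measurable_snd)))
  -- the main upper estimate
  have hub : ∀ ε : ℝ≥0∞, 0 < ε → ∃ N, ∀ n ≥ N, F n ≤ L + ε := by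
    intro ε hε
    have hMne : M ≠ ⊤ := hMfin.ne
    have hdne : (3 : ℝ≥0∞) * (M + 1) ≠ ⊤ :=
      ENNReal.mul_ne_top (by simp) (by simp [hMne])
    have hdne0 : (3 : ℝ≥0∞) * (M + 1) ≠ 0 := by
      simp
    set η := min (ε / (3 * (M + 1))) 1 with hηdef
    have hη0 : 0 < η := lt_min (ENNReal.div_pos hε.ne' hdne) zero_lt_one
    have hηtop : η ≠ ⊤ := ne_top_of_le_ne_top (by simp) (min_le_right _ _)
    set c := η.toReal with hcdef
    have hc0 : 0 < c := ENNReal.toReal_pos hη0.ne' hηtop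
    have hcη : ENNReal.ofReal c = η := ENNReal.ofReal_toReal hηtop
    -- continuity at 0 gives δ
    obtain ⟨δ, hδ0, hcδ⟩ : ∃ δ > (0:ℝ), ∀ x : ℝ, 0 ≤ x → x ≤ δ → ψ x ≤ c := by
      have h1 : ψ ⁻¹' (Set.Iio c) ∈ nhdsWithin 0 (Set.Ici 0) :=
        hψcont (by rw [hψzero]; exact Iio_mem_nhds hc0)
      rw [mem_nhdsGE_iff_exists_Icc_subset] at h1
      obtain ⟨u, hu, hsub⟩ := h1
      exact ⟨u, hu, fun x hx hxu => (hsub ⟨hx, hxu⟩).le⟩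
    obtain ⟨N₁, hN₁⟩ := hmeshb δ hδ0
    refine ⟨max (max N₁ (⌈(a₀ - b₀) / δ⌉₊ + 1)) 1, fun n hn => ?_⟩
    have hn1 : 1 ≤ n := le_trans (le_max_right _ _) hn
    have hnN₁ : N₁ ≤ n := le_trans (le_trans (le_max_left _ _) (le_max_left _ _)) hn
    have hnN₂ : ⌈(a₀ - b₀) / δ⌉₊ + 1 ≤ n :=
      le_trans (le_trans (le_max_right _ _) (le_max_left _ _)) hn
    have hnpos : (0:ℝ) < n := by exact_mod_cast hn1
    have havgδ : (a₀ - b₀) / n ≤ δ := by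
      rw [div_le_iff₀ hnpos]
      have h1 : (a₀ - b₀) / δ ≤ (n : ℝ) := by
        calc (a₀ - b₀) / δ ≤ (⌈(a₀ - b₀) / δ⌉₊ : ℝ) := Nat.le_ceil _
          _ ≤ (n : ℝ) := by exact_mod_cast le_trans (Nat.le_succ _) hnN₂
      calc a₀ - b₀ = (a₀ - b₀) / δ * δ := by field_simp
        _ ≤ (n:ℝ) * δ := mul_le_mul_of_nonneg_right h1 hδ0.le
        _ = δ * n := mul_comm _ _
    -- mesh smallness beyond a₀
    have hmesh : ∀ t, a₀ < t → ψ (h n t - t) ≤ c := by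
      intro t ht
      have htb : b₀ < t := lt_trans hba ht
      obtain ⟨j, hj1, hjlt, hjle, heq⟩ := hidxb n hn1 t htb
      have hjn : n ≤ j - 1 := by
        by_contra hcon
        push_neg at hcon
        have hb1 : b n j ≤ b n n := (hbmono n hn1).monotone (by omega)
        rw [hbn n hn1] at hb1
        linarith
      have hm := hN₁ n hnN₁ hn1 (j-1) hjn
      rw [show j - 1 + 1 = j by omega] at hm
      have harg : h n t - t < δ := by rw [heq]; linarith
      exact hcδ _ (by rw [heq]; linarith) harg.le
    -- pointwise decomposition on E
    have hpt : ∀ᵐ s ∂μ.restrict (Set.Icc b₀ a₀), J n s ≤ I₁ s + (D n s + I₃ n s) := by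
      filter_upwards [ae_restrict_mem measurableSet_Icc] with s hs
      have hsa : min s a₀ = s := min_eq_left hs.2
      have hstep : J n s ≤ ∫⁻ t in Set.Ici s,
          (ENNReal.ofReal (φ (t - s)) + (D n s + Gf n t)) ∂(θ s) := by
        refine lintegral_mono_ae ?_
        filter_upwards [ae_restrict_mem measurableSet_Ici] with t ht
        have h1 : (0:ℝ) ≤ t - s := sub_nonneg.2 ht
        have h2 : (0:ℝ) ≤ s - g n (min s a₀) := sub_nonneg.2 (hgtle n hn1 s)
        have h3 : (0:ℝ) ≤ h n t - t := sub_nonneg.2 (hhge n hn1 t)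
        have hsub : ψ (h n t - g n (min s a₀)) ≤
            ψ (t - s) + (ψ (s - g n (min s a₀)) + ψ (h n t - t)) := by
          have hd : h n t - g n (min s a₀) =
              ((t - s) + (s - g n (min s a₀))) + (h n t - t) := by ring
          rw [hd]
          calc ψ (((t - s) + (s - g n (min s a₀))) + (h n t - t))
              ≤ ψ ((t - s) + (s - g n (min s a₀))) + ψ (h n t - t) :=
                psi_subadd hψ hψzero (by linarith) h3
            _ ≤ (ψ (t - s) + ψ (s - g n (min s a₀))) + ψ (h n t - t) := by
                linarith [psi_subadd hψ hψzero h1 h2]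
            _ = ψ (t - s) + (ψ (s - g n (min s a₀)) + ψ (h n t - t)) := by ring
        calc ENNReal.ofReal (φ (h n t - g n (min s a₀)))
            ≤ ENNReal.ofReal (ψ (t - s) + (ψ (s - g n (min s a₀)) + ψ (h n t - t))) := by
              rw [hφeq _ (by linarith)]
              exact ENNReal.ofReal_le_ofReal hsub
          _ ≤ ENNReal.ofReal (ψ (t - s)) +
              ENNReal.ofReal (ψ (s - g n (min s a₀)) + ψ (h n t - t)) :=
              ENNReal.ofReal_add_le
          _ ≤ ENNReal.ofReal (ψ (t - s)) +
              (ENNReal.ofReal (ψ (s - g n (min s a₀))) + ENNReal.ofReal (ψ (h n t - t))) :=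
              add_le_add_right ENNReal.ofReal_add_le _
          _ = ENNReal.ofReal (φ (t - s)) + (D n s + Gf n t) := by
              rw [hDdef, hGfdef]
              simp only
              rw [hsa, hφeq _ h1,
                hφeq _ (show (0:ℝ) ≤ s - g n s by
                  have h2' := h2; rw [hsa] at h2'; exact h2'),
                hφeq _ h3]
      refine le_trans hstep (le_of_eq ?_)
      have hm1 : Measurable (fun t : ℝ => ENNReal.ofReal (φ (t - s))) :=
        (hφmeas.comp (measurable_id.sub measurable_const)).ennreal_ofReal
      rw [lintegral_add_left hm1,
        lintegral_add_left measurable_const, setLIntegral_const, hθIci, mul_one]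
    -- the A-term
    have hAn : ∫⁻ s in Set.Icc b₀ a₀, D n s ∂μ ≤ ENNReal.ofReal c * M := by
      rw [show μ.restrict (Set.Icc b₀ a₀) = μ.restrict (Set.Ioc b₀ a₀) from
        (Measure.restrict_congr_set Ioc_ae_eq_Icc).symm]
      set u : ℕ → ℝ := fun k => a n (n - k) with hudef
      have humono : Monotone u := fun k k' hk =>
        (haanti n hn1).antitone (Nat.sub_le_sub_left hk n)
      have hu0 : u 0 = b₀ := by simp only [hudef, Nat.sub_zero]; exact han n hn1
      have hun : u n = a₀ := by simp only [hudef, Nat.sub_self]; exact ha0 n hn1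
      have hpieces : ∀ k < n, ∫⁻ x in Set.Ioc (u k) (u (k+1)), D n x ∂μ ≤
          ENNReal.ofReal (ψ (u (k+1) - u k)) * (M / n) := by
        intro k hk
        have hi1 : 1 ≤ n - k := by omega
        have hile : n - k ≤ n := Nat.sub_le n k
        have hueq : u (k+1) = a n (n - k - 1) := rfl
        have hbound : ∀ x ∈ Set.Ioc (u k) (u (k+1)), D n x ≤
            ENNReal.ofReal (ψ (u (k+1) - u k)) := by
          intro x hx
          have hxa : x ≤ a₀ := by
            rw [hueq] at hx
            calc x ≤ a n (n - k - 1) := hx.2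
              _ ≤ a n 0 := (haanti n hn1).antitone (Nat.zero_le _)
              _ = a₀ := ha0 n hn1
          have hxmin : min x a₀ = x := min_eq_left hxa
          have hgx : g n x = a n (n - k) := by
            refine hg n hn1 (n - k) hi1 x ⟨hx.1, ?_⟩
            rw [hueq] at hx
            exact hx.2
          rw [hDdef]
          simp only
          rw [hxmin, hgx]
          have hxnn : (0:ℝ) ≤ x - a n (n - k) := by
            have := hx.1
            simp only [hudef] at this
            linarith
          rw [hφeq _ hxnn]
          refine ENNReal.ofReal_le_ofReal ?_
          have hxle : x - a n (n - k) ≤ u (k+1) - u k := by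
            have := hx.2
            simp only [hudef]
            linarith
          exact hmono (mem_Ici.2 hxnn)
            (mem_Ici.2 (by linarith [sub_nonneg.2 (humono (Nat.le_succ k))])) hxle
        calc ∫⁻ x in Set.Ioc (u k) (u (k+1)), D n x ∂μ
            ≤ ∫⁻ _ in Set.Ioc (u k) (u (k+1)),
              ENNReal.ofReal (ψ (u (k+1) - u k)) ∂μ :=
              setLIntegral_mono' measurableSet_Ioc hbound
          _ = ENNReal.ofReal (ψ (u (k+1) - u k)) * μ (Set.Ioc (u k) (u (k+1))) :=
              setLIntegral_const _ _
          _ = ENNReal.ofReal (ψ (u (k+1) - u k)) * (M / n) := by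
              congr 1
              have : μ (Set.Ioc (a n (n-k)) (a n (n-k-1))) = M / n := by
                have := hμeq n hn1 (n - k) hi1 hile
                rw [show n - k - 1 = n - k - 1 from rfl] at this
                exact this
              rw [hudef]
              simp only
              rw [show n - (k+1) = n - k - 1 by omega]
              exact this
      have hchain := lint_Ioc_sum (m := μ) (fun x => D n x) u humono n
        (fun k => ENNReal.ofReal (ψ (u (k+1) - u k)) * (M / n)) hpieces
      rw [hu0, hun] at hchain
      refine le_trans hchain ?_
      refine jensen_sum_bound hψ hψ0 n hn1 (fun k => u (k+1) - u k)
        (fun k => sub_nonneg.2 (humono (Nat.le_succ k))) c ?_ M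
      rw [Finset.sum_range_sub u n, hu0, hun]
      exact hcδ _ (div_nonneg (by linarith) hnpos.le) havgδ
    -- the B-term
    have hKmeas : Measurable ((Set.Icc b₀ a₀).indicator (Gf n)) :=
      ((hφmeas.comp ((hhmeas n hn1).sub measurable_id)).ennreal_ofReal).indicator
        measurableSet_Icc
    have hνside : ∫⁻ t, (Set.Icc b₀ a₀).indicator (Gf n) t ∂ν ≤ ENNReal.ofReal c * M := by
      rw [lintegral_indicator measurableSet_Icc,
        show ν.restrict (Set.Icc b₀ a₀) = ν.restrict (Set.Ioc b₀ a₀) from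
          (Measure.restrict_congr_set Ioc_ae_eq_Icc).symm]
      have hpieces : ∀ k < n, ∫⁻ x in Set.Ioc (b n k) (b n (k+1)), Gf n x ∂ν ≤
          ENNReal.ofReal (ψ (b n (k+1) - b n k)) * (M / n) := by
        intro k hk
        have hbound : ∀ x ∈ Set.Ioc (b n k) (b n (k+1)), Gf n x ≤
            ENNReal.ofReal (ψ (b n (k+1) - b n k)) := by
          intro x hx
          have hhx : h n x = b n (k+1) := by
            refine hh n hn1 (k+1) (by omega) x ?_
            rw [show k + 1 - 1 = k from rfl]
            exact hx
          rw [hGfdef]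
          simp only
          rw [hhx]
          have hxnn : (0:ℝ) ≤ b n (k+1) - x := sub_nonneg.2 hx.2
          rw [hφeq _ hxnn]
          refine ENNReal.ofReal_le_ofReal ?_
          exact hmono (mem_Ici.2 hxnn)
            (mem_Ici.2 (sub_nonneg.2 ((hbmono n hn1).monotone (Nat.le_succ k))))
            (by linarith [hx.1])
        calc ∫⁻ x in Set.Ioc (b n k) (b n (k+1)), Gf n x ∂ν
            ≤ ∫⁻ _ in Set.Ioc (b n k) (b n (k+1)),
              ENNReal.ofReal (ψ (b n (k+1) - b n k)) ∂ν :=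
              setLIntegral_mono' measurableSet_Ioc hbound
          _ = ENNReal.ofReal (ψ (b n (k+1) - b n k)) * ν (Set.Ioc (b n k) (b n (k+1))) :=
              setLIntegral_const _ _
          _ = ENNReal.ofReal (ψ (b n (k+1) - b n k)) * (M / n) := by
              congr 1
              have := hνeq n hn1 (k+1) (by omega) (by omega)
              rw [show k + 1 - 1 = k from rfl] at this
              exact this
      have hchain := lint_Ioc_sum (m := ν) (Gf n) (b n)
        ((hbmono n hn1).monotone) n
        (fun k => ENNReal.ofReal (ψ (b n (k+1) - b n k)) * (M / n)) hpieces
      rw [hb0 n hn1, hbn n hn1] at hchain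
      refine le_trans hchain ?_
      refine jensen_sum_bound hψ hψ0 n hn1 (fun k => b n (k+1) - b n k)
        (fun k => sub_nonneg.2 ((hbmono n hn1).monotone (Nat.le_succ k))) c ?_ M
      rw [Finset.sum_range_sub (b n) n, hb0 n hn1, hbn n hn1]
      exact hcδ _ (div_nonneg (by linarith) hnpos.le) havgδ
    have hBn : ∫⁻ s in Set.Icc b₀ a₀, I₃ n s ∂μ ≤
        ENNReal.ofReal c * M + ENNReal.ofReal c * M := by
      have hpt3 : ∀ᵐ s ∂μ.restrict (Set.Icc b₀ a₀), I₃ n s ≤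
          (∫⁻ t, (Set.Icc b₀ a₀).indicator (Gf n) t ∂(θ s)) + ENNReal.ofReal c := by
        filter_upwards [ae_restrict_mem measurableSet_Icc] with s hs
        have hstep : I₃ n s ≤ ∫⁻ t in Set.Ici s,
            ((Set.Icc b₀ a₀).indicator (Gf n) t + ENNReal.ofReal c) ∂(θ s) := by
          refine lintegral_mono_ae ?_
          filter_upwards [ae_restrict_mem measurableSet_Ici] with t ht
          rcases le_or_gt t a₀ with hta | hta
          · have htmem : t ∈ Set.Icc b₀ a₀ := ⟨le_trans hs.1 ht, hta⟩
            rw [Set.indicator_of_mem htmem]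
            exact le_self_add
          · have hGle : Gf n t ≤ ENNReal.ofReal c := by
              rw [hGfdef]
              simp only
              rw [hφeq _ (sub_nonneg.2 (hhge n hn1 t))]
              exact ENNReal.ofReal_le_ofReal (hmesh t hta)
            exact le_trans hGle le_add_self
        refine le_trans hstep ?_
        rw [lintegral_add_right _ measurable_const, setLIntegral_const, hθIci, mul_one]
        gcongr
        exact Measure.restrict_le_self
      calc ∫⁻ s in Set.Icc b₀ a₀, I₃ n s ∂μ
          ≤ ∫⁻ s in Set.Icc b₀ a₀,
            ((∫⁻ t, (Set.Icc b₀ a₀).indicator (Gf n) t ∂(θ s)) + ENNReal.ofReal c) ∂μ :=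
            lintegral_mono_ae hpt3
        _ = (∫⁻ s in Set.Icc b₀ a₀,
              (∫⁻ t, (Set.Icc b₀ a₀).indicator (Gf n) t ∂(θ s)) ∂μ) +
            ENNReal.ofReal c * M := by
            rw [lintegral_add_right _ measurable_const, setLIntegral_const]
        _ ≤ (∫⁻ s, (∫⁻ t, (Set.Icc b₀ a₀).indicator (Gf n) t ∂(θ s)) ∂μ) +
            ENNReal.ofReal c * M := by
            gcongr
            exact Measure.restrict_le_self
        _ = (∫⁻ t, (Set.Icc b₀ a₀).indicator (Gf n) t ∂ν) + ENNReal.ofReal c * M := by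
            rw [hνbind, Measure.lintegral_bind θ.measurable.aemeasurable hKmeas.aemeasurable]
        _ ≤ ENNReal.ofReal c * M + ENNReal.ofReal c * M := by
            gcongr
    -- assembling
    have hεbound : ENNReal.ofReal c * M +
        (ENNReal.ofReal c * M + ENNReal.ofReal c * M) ≤ ε := by
      rw [hcη]
      have h1 : η ≤ ε / (3 * (M + 1)) := min_le_left _ _
      have h2 : η * M ≤ ε / (3 * (M + 1)) * (M + 1) :=
        mul_le_mul' h1 le_self_add
      calc η * M + (η * M + η * M)
          ≤ ε / (3 * (M + 1)) * (M + 1) + (ε / (3 * (M + 1)) * (M + 1) +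
            ε / (3 * (M + 1)) * (M + 1)) := by gcongr
        _ = 3 * (M + 1) * (ε / (3 * (M + 1))) := by ring
        _ = ε := ENNReal.mul_div_cancel hdne0 hdne
    calc F n = ∫⁻ s in Set.Icc b₀ a₀, J n s ∂μ := hFrw n hn1
      _ ≤ ∫⁻ s in Set.Icc b₀ a₀, (I₁ s + (D n s + I₃ n s)) ∂μ := lintegral_mono_ae hpt
      _ = (∫⁻ s in Set.Icc b₀ a₀, I₁ s ∂μ) +
          ∫⁻ s in Set.Icc b₀ a₀, (D n s + I₃ n s) ∂μ := lintegral_add_left hI₁meas _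
      _ = L + ((∫⁻ s in Set.Icc b₀ a₀, D n s ∂μ) +
          ∫⁻ s in Set.Icc b₀ a₀, I₃ n s ∂μ) := by
          rw [← hLrw, lintegral_add_right _ (hI₃meas n hn1)]
      _ ≤ L + (ENNReal.ofReal c * M +
          (ENNReal.ofReal c * M + ENNReal.ofReal c * M)) := by
          gcongr
          all_goals first
          | exact hAn
          | exact hBn
      _ ≤ L + ε := add_le_add_right hεbound _
  -- conclusion
  rcases eq_or_ne L ⊤ with hLtop | hLne
  · have hFtop : ∀ᶠ n in atTop, F n = ⊤ := by
      filter_upwards [eventually_ge_atTop 1] with n hn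
      exact top_le_iff.1 (hLtop ▸ hlow n hn)
    rw [hLtop]
    exact Tendsto.congr' (hFtop.mono fun n hn => hn.symm) tendsto_const_nhds
  · rw [ENNReal.tendsto_nhds hLne]
    intro ε hε
    obtain ⟨N, hN⟩ := hub ε hε
    filter_upwards [eventually_ge_atTop (max N 1)] with n hn
    exact ⟨le_trans tsub_le_self (hlow n (le_trans (le_max_right N 1) hn)),
      hN n (le_trans (le_max_left N 1) hn)⟩
end
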